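/- arXiv:2409.14404 — 12 statements merged into one kernel-verified Lean document; each statement's English description precedes it below -/
import Mathlib

section
/- Let n ≥ 2 be an integer, b > 1, and let ψ : [1,b] → ℝ be differentiable. If there is a constant θ̂ ∈ (0,π) such that θ_ψ(x) = θ̂ for all x ∈ [1,b], then for every integer k with 1 ≤ k ≤ n−1 and every x ∈ [1,b] one has Re((ψ(x)+ix)^k) − cot(θ̂)·Im((ψ(x)+ix)^k) > 0. -/
/-- `arccot λ := π/2 − arctan λ ∈ (0, π)`. -/
noncomputable def arccot (x : ℝ) : ℝ := Real.pi / 2 - Real.arctan x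

/-!
Writing `α = arccot (ψ x / x)`, the number `ψ x + i x` has argument `α` and modulus
`r = x / sin α`, so `(ψ x + i x)^k = r^k e^{i k α}` and `Re − cot θ̂ · Im = r^k sin (θ̂ − k α) / sin θ̂`. Since `arccot (ψ' x) > 0`, the phase
condition gives `0 < k α ≤ (n − 1) α < θ̂ < π`, so this quantity is positive.
-/

open Real

lemma arccot_pos (x : ℝ) : 0 < arccot x := by
  have := arctan_lt_pi_div_two x
  unfold arccot; linarith

lemma arccot_lt_pi (x : ℝ) : arccot x < π := by
  have := neg_pi_div_two_lt_arctan x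
  unfold arccot; linarith

lemma cot_arccot (x : ℝ) : cot (arccot x) = x := by
  rw [arccot, cot_eq_cos_div_sin, cos_pi_div_two_sub, sin_pi_div_two_sub, ← tan_eq_sin_div_cos,
    tan_arctan]

lemma ofReal_add_ofReal_mul_I_eq_mul_exp_arccot {x : ℝ} (hx : 0 < x) (y : ℝ) :
    (y : ℂ) + x * Complex.I =
      ((x / sin (arccot (y / x)) : ℝ) : ℂ) * Complex.exp ((arccot (y / x) : ℝ) * Complex.I) := by
  have hsin : sin (arccot (y / x)) ≠ 0 :=
    (sin_pos_of_pos_of_lt_pi (arccot_pos _) (arccot_lt_pi _)).ne'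
  have hcot := cot_arccot (y / x)
  rw [cot_eq_cos_div_sin] at hcot
  apply Complex.ext <;> simp only [Complex.add_re, Complex.add_im, Complex.ofReal_re,
    Complex.ofReal_im, Complex.mul_re, Complex.mul_im, Complex.I_re, Complex.I_im,
    Complex.exp_ofReal_mul_I_re, Complex.exp_ofReal_mul_I_im]
  · field_simp at hcot ⊢
    linarith
  · field_simp
    ring

lemma re_sub_cot_mul_im_mul_exp_pos {r α θ : ℝ} (hr : 0 < r) (hα : 0 < α) (hαθ : α < θ)
    (hθ : θ < π) :
    0 < ((r : ℂ) * Complex.exp (α * Complex.I)).re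
      - cot θ * ((r : ℂ) * Complex.exp (α * Complex.I)).im := by
  have hsinθ : 0 < sin θ := sin_pos_of_pos_of_lt_pi (hα.trans hαθ) hθ
  have hsin_sub : 0 < sin (θ - α) := sin_pos_of_pos_of_lt_pi (by linarith) (by linarith)
  have key : r * cos α - cot θ * (r * sin α) = r * sin (θ - α) / sin θ := by
    rw [sin_sub, cot_eq_cos_div_sin]
    field_simp
  rw [Complex.re_ofReal_mul, Complex.im_ofReal_mul, Complex.exp_ofReal_mul_I_re,
    Complex.exp_ofReal_mul_I_im, key]
  positivity

theorem stmt1_general (n : ℕ) (b : ℝ)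
    (ψ ψ' : ℝ → ℝ)
    (θhat : ℝ) (hθπ : θhat < Real.pi)
    (hθ : ∀ x ∈ Set.Icc (1:ℝ) b,
      arccot (ψ' x) + ((n - 1 : ℕ) : ℝ) * arccot (ψ x / x) = θhat) :
    ∀ k : ℕ, 1 ≤ k → k ≤ n - 1 → ∀ x ∈ Set.Icc (1:ℝ) b,
      0 < ((((ψ x : ℝ) : ℂ) + (x : ℂ) * Complex.I) ^ k).re
            - Real.cot θhat * ((((ψ x : ℝ) : ℂ) + (x : ℂ) * Complex.I) ^ k).im := by
  intro k hk1 hkn x hx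
  have hx0 : 0 < x := one_pos.trans_le hx.1
  set α := arccot (ψ x / x)
  have hα := arccot_pos (ψ x / x)
  have hkα : (k : ℝ) * α ≤ ((n - 1 : ℕ) : ℝ) * α := by gcongr
  have hkα_pos : 0 < (k : ℝ) * α := mul_pos (by exact_mod_cast hk1) hα
  have hkα_lt : (k : ℝ) * α < θhat := by linarith [hθ x hx, arccot_pos (ψ' x)]
  have hr : 0 < x / sin α := div_pos hx0 (sin_pos_of_pos_of_lt_pi hα (arccot_lt_pi _))
  rw [ofReal_add_ofReal_mul_I_eq_mul_exp_arccot hx0, mul_pow, ← Complex.exp_nat_mul,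
    ← mul_assoc, ← Complex.ofReal_pow]
  push_cast
  exact_mod_cast re_sub_cot_mul_im_mul_exp_pos (pow_pos hr k) hkα_pos hkα_lt hθπ

/-- If the Lagrangian phase `θ_ψ ≡ θ̂ ∈ (0,π)` on `[1,b]`, then
`Re((ψ+ix)^k) − cot(θ̂)·Im((ψ+ix)^k) > 0` for all `1 ≤ k ≤ n−1` and `x ∈ [1,b]`. -/
theorem stmt1 (n : ℕ) (hn : 2 ≤ n) (b : ℝ) (hb : 1 < b)
    (ψ ψ' : ℝ → ℝ)
    (hderiv : ∀ x ∈ Set.Icc (1:ℝ) b, HasDerivAt ψ (ψ' x) x)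
    (θhat : ℝ) (hθ0 : 0 < θhat) (hθπ : θhat < Real.pi)
    (hθ : ∀ x ∈ Set.Icc (1:ℝ) b,
      arccot (ψ' x) + ((n - 1 : ℕ) : ℝ) * arccot (ψ x / x) = θhat) :
    ∀ k : ℕ, 1 ≤ k → k ≤ n - 1 → ∀ x ∈ Set.Icc (1:ℝ) b,
      0 < ((((ψ x : ℝ) : ℂ) + (x : ℂ) * Complex.I) ^ k).re
            - Real.cot θhat * ((((ψ x : ℝ) : ℂ) + (x : ℂ) * Complex.I) ^ k).im :=
  stmt1_general n b ψ ψ' θhat hθπ hθ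
end

section
/- Let b > 1 and p, q > 0 be real numbers with 3(p²b − q²) > b³ − 1. Define c_q := (p³ − 3pb² − q³ + 3q)/(3p²b − b³ − 3q² + 1) (the denominator is positive by hypothesis). Then p > b(c_q + √(1 + c_q²)). Furthermore, if in addition p ≤ q, then also q > c_q + √(1 + c_q²). -/
/-!
For `t > 0` one has `c + √(1 + c²) < t` as soon as `2tc < t² − 1`: geometrically, if `c = cot θ`
then `c + √(1 + c²) = cot (θ/2)`. With `c = c_q = N / D`, `D > 0`, both claims thus reduce to
polynomial inequalities, `2pbN < (p² − b²)D` and `2qN < (q² − 1)D`, and each difference is an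
explicit sum of terms that are positive for `b > 1`, `p, q > 0` (and `1 < p ≤ q` in the second).
-/

/-- `Re ((p + i b)³) − Re ((q + i)³)`. -/
def cubeReDiff (b p q : ℝ) : ℝ := p ^ 3 - 3 * p * b ^ 2 - q ^ 3 + 3 * q

/-- `Im ((p + i b)³) − Im ((q + i)³)`. -/
def cubeImDiff (b p q : ℝ) : ℝ := 3 * p ^ 2 * b - b ^ 3 - 3 * q ^ 2 + 1

lemma add_sqrt_one_add_sq_lt {c t : ℝ} (ht : 0 < t) (h : 2 * t * c < t ^ 2 - 1) :
    c + √(1 + c ^ 2) < t := by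
  have hc : c < t := by nlinarith
  have hsq : 1 + c ^ 2 < (t - c) ^ 2 := by nlinarith
  linarith [(Real.sqrt_lt' (by linarith)).mpr hsq]

lemma mul_add_sqrt_one_add_sq_lt {c s t : ℝ} (hs : 0 < s) (ht : 0 < t)
    (h : 2 * s * t * c < t ^ 2 - s ^ 2) : s * (c + √(1 + c ^ 2)) < t := by
  have h' : 2 * (t / s) * c < (t / s) ^ 2 - 1 := by
    have e₁ : 2 * (t / s) * c = 2 * s * t * c / s ^ 2 := by field_simp
    have e₂ : (t / s) ^ 2 - 1 = (t ^ 2 - s ^ 2) / s ^ 2 := by field_simp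
    rw [e₁, e₂]
    exact div_lt_div_of_pos_right h (by positivity)
  calc s * (c + √(1 + c ^ 2)) < s * (t / s) :=
        mul_lt_mul_of_pos_left (add_sqrt_one_add_sq_lt (div_pos ht hs) h') hs
    _ = t := by field_simp

lemma cubeImDiff_pos_iff {b p q : ℝ} :
    0 < cubeImDiff b p q ↔ b ^ 3 - 1 < 3 * (p ^ 2 * b - q ^ 2) := by
  unfold cubeImDiff
  constructor <;> intro h <;> linarith

lemma two_mul_cubeReDiff_lt {b p q : ℝ} (hb : 1 < b) (hp : 0 < p) (hq : 0 < q) :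
    2 * b * p * cubeReDiff b p q < (p ^ 2 - b ^ 2) * cubeImDiff b p q := by
  have hid : (p ^ 2 - b ^ 2) * cubeImDiff b p q - 2 * b * p * cubeReDiff b p q
      = (p - q) ^ 2 * (p ^ 2 + 2 * p * q + 3)
        + (b - 1) * ((p ^ 2 + b ^ 2) ^ 2 + b ^ 3 + b ^ 2 + 3 * b * q ^ 2
          + 3 * (q - p) ^ 2 + 2 * p * q ^ 3 + p ^ 2 * (2 * b - 1)) := by
    unfold cubeReDiff cubeImDiff; ring
  have hb0 : 0 < b := by linarith
  have h₁ : 0 ≤ (p - q) ^ 2 * (p ^ 2 + 2 * p * q + 3) := by positivity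
  have h₂ : 0 < (b - 1) * ((p ^ 2 + b ^ 2) ^ 2 + b ^ 3 + b ^ 2 + 3 * b * q ^ 2
      + 3 * (q - p) ^ 2 + 2 * p * q ^ 3 + p ^ 2 * (2 * b - 1)) := by
    apply mul_pos (by linarith)
    have : 0 < p ^ 2 * (2 * b - 1) := mul_pos (by positivity) (by linarith)
    positivity
  linarith

lemma two_mul_cubeReDiff_lt_of_le {b p q : ℝ} (hb : 1 < b) (hp : 0 < p) (hpq : p ≤ q)
    (hD : 0 < cubeImDiff b p q) :
    2 * q * cubeReDiff b p q < (q ^ 2 - 1) * cubeImDiff b p q := by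
  have hp1 : 1 < p := by
    have hE : 0 < (b - 1) * (3 * p ^ 2 - b ^ 2 - b - 1) := by
      have hid : (b - 1) * (3 * p ^ 2 - b ^ 2 - b - 1)
          = cubeImDiff b p q + 3 * (q ^ 2 - p ^ 2) := by
        unfold cubeImDiff; ring
      rw [hid]; nlinarith
    have : 0 < 3 * p ^ 2 - b ^ 2 - b - 1 := (pos_iff_pos_of_mul_pos hE).mp (by linarith)
    nlinarith
  have hid : (q ^ 2 - 1) * cubeImDiff b p q - 2 * q * cubeReDiff b p q
      = (q ^ 2 - 1) * cubeImDiff b p q + (q - p) * (2 * q) * (p ^ 2 + p * q + q ^ 2 - 3)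
        + 6 * p * q * (b ^ 2 - 1) := by
    unfold cubeReDiff cubeImDiff; ring
  have h₁ : 0 < (q ^ 2 - 1) * cubeImDiff b p q := mul_pos (by nlinarith) hD
  have h₂ : 0 ≤ (q - p) * (2 * q) * (p ^ 2 + p * q + q ^ 2 - 3) :=
    mul_nonneg (mul_nonneg (by linarith) (by linarith)) (by nlinarith)
  have h₃ : 0 < 6 * p * q * (b ^ 2 - 1) :=
    mul_pos (mul_pos (by positivity) (by linarith)) (by nlinarith)
  linarith

lemma mul_div_lt_of_mul_lt {a x N D : ℝ} (hD : 0 < D) (h : a * N < x * D) : a * (N / D) < x := by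
  rwa [← mul_div_assoc, div_lt_iff₀ hD]

/-- On the blow-up of `CP³`, if `Im(α+iβ)³ > 0` and `p, q > 0`, then the stability
inequality `p > b(c_q + √(1+c_q²))` holds automatically; if moreover `p ≤ q`, then
also `q > c_q + √(1+c_q²)`. -/
theorem stmt3 (b p q : ℝ) (hb : 1 < b) (hp : 0 < p) (hq : 0 < q)
    (him : b ^ 3 - 1 < 3 * (p ^ 2 * b - q ^ 2)) :
    b * ((p ^ 3 - 3 * p * b ^ 2 - q ^ 3 + 3 * q) / (3 * p ^ 2 * b - b ^ 3 - 3 * q ^ 2 + 1)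
        + Real.sqrt (1 + ((p ^ 3 - 3 * p * b ^ 2 - q ^ 3 + 3 * q) /
            (3 * p ^ 2 * b - b ^ 3 - 3 * q ^ 2 + 1)) ^ 2)) < p ∧
    (p ≤ q →
      (p ^ 3 - 3 * p * b ^ 2 - q ^ 3 + 3 * q) / (3 * p ^ 2 * b - b ^ 3 - 3 * q ^ 2 + 1)
        + Real.sqrt (1 + ((p ^ 3 - 3 * p * b ^ 2 - q ^ 3 + 3 * q) /
            (3 * p ^ 2 * b - b ^ 3 - 3 * q ^ 2 + 1)) ^ 2) < q) := by
  have hD : 0 < cubeImDiff b p q := cubeImDiff_pos_iff.mpr him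
  refine ⟨mul_add_sqrt_one_add_sq_lt (by linarith) hp ?_, fun hpq ↦ add_sqrt_one_add_sq_lt hq ?_⟩
  · exact mul_div_lt_of_mul_lt hD (two_mul_cubeReDiff_lt hb hp hq)
  · exact mul_div_lt_of_mul_lt hD (two_mul_cubeReDiff_lt_of_le hb hp hpq hD)
end

section
/- Let n ≥ 2 be an integer, b > 1, p ∈ ℝ, and let I ⊂ ℝ be an open interval such that Im((p+ib)^n) > Im((s+i)^n) for every s ∈ I. For s ∈ I set c_s := (Re((p+ib)^n) − Re((s+i)^n))/(Im((p+ib)^n) − Im((s+i)^n)). Let Ψ : I × [1,b] → ℝ be such that: (a) for each s ∈ I, Ψ(s,1) = s, Ψ(s,b) = p, the function x ↦ Ψ(s,x) is differentiable and its Lagrangian phase is constant equal to arccot(c_s), i.e. arccot(∂ₓΨ(s,x)) + (n−1)·arccot(Ψ(s,x)/x) = arccot(c_s) for all x ∈ [1,b]; (b) for each x ∈ [1,b], the function s ↦ Ψ(s,x) is differentiable; (c) for each s ∈ I, Re((s+i)^{n−1}) − c_s·Im((s+i)^{n−1}) > 0. Then for every x ∈ [1,b) the function s ↦ Ψ(s,x)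 is strictly increasing on I; in fact ∂Ψ/∂s(s,x) > 0 for all s ∈ I and x ∈ [1,b). -/
open Complex ComplexConjugate Set Topology

lemma sin_arccot_pos (t : ℝ) : 0 < Real.sin (arccot t) := by
  rw [arccot, Real.sin_pi_div_two_sub, Real.cos_arctan]; positivity

lemma exp_arccot_mul_I (t : ℝ) :
    exp (arccot t * I) = Real.sin (arccot t) * ((t : ℂ) + I) := by
  rw [exp_mul_I, ← ofReal_cos, ← ofReal_sin, arccot, Real.cos_pi_div_two_sub,
    Real.sin_pi_div_two_sub, Real.sin_arctan, Real.cos_arctan]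
  push_cast
  ring

theorem exists_pos_mul_pow_eq_of_arccot_add (m : ℕ) {a ψ x c : ℝ} (hx : 0 < x)
    (h : arccot a + m * arccot (ψ / x) = arccot c) :
    ∃ r : ℝ, 0 < r ∧ ((a : ℂ) + I) * ((ψ : ℂ) + x * I) ^ m = r * ((c : ℂ) + I) := by
  have hexp := congrArg (fun θ : ℝ => exp (θ * I)) h
  simp only [ofReal_add, ofReal_mul, ofReal_natCast] at hexp
  rw [add_mul, exp_add, mul_assoc, exp_nat_mul, exp_arccot_mul_I, exp_arccot_mul_I,
    exp_arccot_mul_I] at hexp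
  have hψ : (ψ : ℂ) + x * I = x * ((ψ / x : ℝ) + I) := by
    have : (x : ℂ) ≠ 0 := by exact_mod_cast hx.ne'
    push_cast; field_simp
  rw [hψ]
  have h₁ := sin_arccot_pos a
  have h₂ := sin_arccot_pos (ψ / x)
  have h₃ := sin_arccot_pos c
  generalize Real.sin (arccot a) = σ₁, Real.sin (arccot (ψ / x)) = σ₂,
    Real.sin (arccot c) = σ₃ at hexp h₁ h₂ h₃
  generalize ψ / x = q at hexp
  rw [mul_pow] at hexp ⊢
  refine ⟨x ^ m * σ₃ / (σ₁ * σ₂ ^ m), by positivity, ?_⟩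
  have : (σ₁ : ℂ) ≠ 0 := by exact_mod_cast h₁.ne'
  have : (σ₂ : ℂ) ≠ 0 := by exact_mod_cast h₂.ne'
  push_cast
  field_simp
  linear_combination (x : ℂ) ^ m * hexp

theorem re_sub_mul_im_pos_of_mul_eq_mul {a c r : ℝ} {w : ℂ} (hr : 0 < r)
    (h : ((a : ℂ) + I) * w = r * ((c : ℂ) + I)) : 0 < w.re - c * w.im := by
  have hre := congrArg re h
  have him := congrArg im h
  simp only [mul_re, mul_im, add_re, add_im, ofReal_re, ofReal_im, I_re, I_im, add_zero, zero_add,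
    one_mul, mul_one, sub_zero, zero_mul] at hre him
  have key : (a ^ 2 + 1) * (w.re - c * w.im) = r * (1 + c ^ 2) := by
    linear_combination (a + c) * hre + (1 - a * c) * him
  have : 0 < (a ^ 2 + 1) * (w.re - c * w.im) := by rw [key]; positivity
  exact pos_of_mul_pos_right this (by positivity)

theorem re_sub_mul_im_pow_pos_of_arccot_add (m : ℕ) {a ψ x c : ℝ} (hx : 0 < x)
    (h : arccot a + m * arccot (ψ / x) = arccot c) :
    0 < (((ψ : ℂ) + x * I) ^ m).re - c * (((ψ : ℂ) + x * I) ^ m).im := by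
  obtain ⟨r, hr, hmul⟩ := exists_pos_mul_pow_eq_of_arccot_add m hx h
  exact re_sub_mul_im_pos_of_mul_eq_mul hr hmul

theorem HasDerivAt.exists_pos_hasDerivAt_pow_of_arccot_add {n : ℕ} (hn : 0 < n) {f : ℝ → ℝ}
    {f' c x : ℝ} (hx : 0 < x) (hf : HasDerivAt f f' x)
    (hph : arccot f' + ((n - 1 : ℕ) : ℝ) * arccot (f x / x) = arccot c) :
    ∃ r : ℝ, 0 < r ∧ HasDerivAt (fun x => ((f x : ℂ) + x * I) ^ n) (r * ((c : ℂ) + I)) x := by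
  obtain ⟨r, hr, hmul⟩ := exists_pos_mul_pow_eq_of_arccot_add (n - 1) hx hph
  refine ⟨n * r, by positivity, ?_⟩
  have hw : HasDerivAt (fun x => (f x : ℂ) + x * I) (f' + I) x := by
    simpa using hf.ofReal_comp.fun_add ((hasDerivAt_id x).ofReal_comp.mul_const I)
  refine (hw.fun_pow n).congr_deriv ?_
  rw [mul_assoc, mul_comm _ ((f' : ℂ) + I), hmul]
  push_cast
  ring

theorem HasDerivAt.complex_re {f : ℝ → ℂ} {f' : ℂ} {x : ℝ} (h : HasDerivAt f f' x) :
    HasDerivAt (fun x => (f x).re) f'.re x :=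
  reCLM.hasFDerivAt.comp_hasDerivAt x h

theorem HasDerivAt.complex_im {f : ℝ → ℂ} {f' : ℂ} {x : ℝ} (h : HasDerivAt f f' x) :
    HasDerivAt (fun x => (f x).im) f'.im x :=
  imCLM.hasFDerivAt.comp_hasDerivAt x h

section ConstantPhase

variable {n : ℕ} {f f' : ℝ → ℝ} {c x₀ x₁ : ℝ}

theorem re_sub_mul_im_pow_eq_of_arccot_add (hn : 0 < n) (hx₀ : 0 < x₀)
    (hf : ∀ x ∈ Icc x₀ x₁, HasDerivAt f (f' x) x)
    (hph : ∀ x ∈ Icc x₀ x₁, arccot (f' x) + ((n - 1 : ℕ) : ℝ) * arccot (f x / x) = arccot c) :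
    ∀ x ∈ Icc x₀ x₁, (((f x : ℂ) + x * I) ^ n).re - c * (((f x : ℂ) + x * I) ^ n).im
      = (((f x₀ : ℂ) + x₀ * I) ^ n).re - c * (((f x₀ : ℂ) + x₀ * I) ^ n).im := by
  have hderiv : ∀ x ∈ Icc x₀ x₁, HasDerivAt
      (fun x => (((f x : ℂ) + x * I) ^ n).re - c * (((f x : ℂ) + x * I) ^ n).im) 0 x := by
    intro x hx
    obtain ⟨r, -, hF⟩ := (hf x hx).exists_pos_hasDerivAt_pow_of_arccot_add hn
      (hx₀.trans_le hx.1) (hph x hx)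
    refine (hF.complex_re.fun_sub (hF.complex_im.const_mul c)).congr_deriv ?_
    simp only [re_ofReal_mul, im_ofReal_mul, add_re, add_im, ofReal_re, ofReal_im, I_re, I_im]
    ring
  exact constant_of_has_deriv_right_zero
    (fun x hx => (hderiv x hx).continuousAt.continuousWithinAt)
    (fun x hx => (hderiv x (Ico_subset_Icc_self hx)).hasDerivWithinAt)

theorem strictMonoOn_im_pow_of_arccot_add (hn : 0 < n) (hx₀ : 0 < x₀)
    (hf : ∀ x ∈ Icc x₀ x₁, HasDerivAt f (f' x) x)
    (hph : ∀ x ∈ Icc x₀ x₁, arccot (f' x) + ((n - 1 : ℕ) : ℝ) * arccot (f x / x) = arccot c) :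
    StrictMonoOn (fun x => (((f x : ℂ) + x * I) ^ n).im) (Icc x₀ x₁) := by
  have hderiv : ∀ x ∈ Icc x₀ x₁, ∃ r : ℝ, 0 < r ∧
      HasDerivAt (fun x => (((f x : ℂ) + x * I) ^ n).im) r x := by
    intro x hx
    obtain ⟨r, hr, hF⟩ := (hf x hx).exists_pos_hasDerivAt_pow_of_arccot_add hn
      (hx₀.trans_le hx.1) (hph x hx)
    refine ⟨r, hr, hF.complex_im.congr_deriv ?_⟩
    simp
  refine strictMonoOn_of_deriv_pos (convex_Icc x₀ x₁) (fun x hx => ?_) fun x hx => ?_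
  · obtain ⟨r, -, hF⟩ := hderiv x hx
    exact hF.continuousAt.continuousWithinAt
  · rw [interior_Icc] at hx
    obtain ⟨r, hr, hF⟩ := hderiv x (Ioo_subset_Icc_self hx)
    rwa [hF.deriv]

end ConstantPhase

theorem im_mul_re_sub_mul_im_eq_of_eventually_collinear {f g : ℝ → ℂ} {f' g' : ℂ} {c : ℝ → ℝ}
    {s : ℝ}
    (hf : HasDerivAt f f' s) (hg : HasDerivAt g g' s)
    (hcol : ∀ᶠ σ in 𝓝 s, (f σ).re = c σ * (f σ).im ∧ (g σ).re = c σ * (g σ).im) :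
    (g s).im * (f'.re - c s * f'.im) = (f s).im * (g'.re - c s * g'.im) := by
  have hderiv : HasDerivAt (fun σ => (conj (f σ) * g σ).im)
      (conj f' * g s + conj (f s) * g').im s :=
    (hf.star.mul hg).complex_im
  have hzero : (fun σ => (conj (f σ) * g σ).im) =ᶠ[𝓝 s] fun _ => 0 := by
    filter_upwards [hcol] with σ ⟨hfσ, hgσ⟩
    simp only [mul_im, conj_re, conj_im, hfσ, hgσ]
    ring
  have h := hderiv.unique ((hasDerivAt_const s (0 : ℝ)).congr_of_eventuallyEq hzero)
  obtain ⟨hfs, hgs⟩ := hcol.self_of_nhds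
  simp only [add_im, mul_im, conj_re, conj_im, hfs, hgs] at h
  linear_combination h

theorem pos_of_hasDerivAt_of_eventually_collinear {n : ℕ} (hn : 0 < n) {P : ℂ} {c u : ℝ → ℝ}
    {u' x s : ℝ} (hu : HasDerivAt u u' s)
    (hcol : ∀ᶠ σ in 𝓝 s,
      (P - ((u σ : ℂ) + x * I) ^ n).re = c σ * (P - ((u σ : ℂ) + x * I) ^ n).im ∧
      (P - ((σ : ℂ) + I) ^ n).re = c σ * (P - ((σ : ℂ) + I) ^ n).im)
    (hW : (((u s : ℂ) + x * I) ^ n).im < P.im) (hS : (((s : ℂ) + I) ^ n).im < P.im)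
    (hWpos : 0 < (((u s : ℂ) + x * I) ^ (n - 1)).re - c s * (((u s : ℂ) + x * I) ^ (n - 1)).im)
    (hSpos : 0 < (((s : ℂ) + I) ^ (n - 1)).re - c s * (((s : ℂ) + I) ^ (n - 1)).im) :
    0 < u' := by
  have hWd := ((hu.ofReal_comp.add_const ((x : ℂ) * I)).fun_pow n).const_sub P
  have hSd := (((hasDerivAt_id' s).ofReal_comp.add_const I).fun_pow n).const_sub P
  have key := im_mul_re_sub_mul_im_eq_of_eventually_collinear hWd hSd hcol
  simp only [neg_re, neg_im, mul_re, mul_im, natCast_re, natCast_im, ofReal_re, ofReal_im,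
    sub_im] at key
  have hn' : (0 : ℝ) < n := Nat.cast_pos.2 hn
  have hmul : u' * (n * ((((u s : ℂ) + x * I) ^ (n - 1)).re
      - c s * (((u s : ℂ) + x * I) ^ (n - 1)).im) * (P.im - (((s : ℂ) + I) ^ n).im))
      = n * ((((s : ℂ) + I) ^ (n - 1)).re - c s * (((s : ℂ) + I) ^ (n - 1)).im)
        * (P.im - (((u s : ℂ) + x * I) ^ n).im) := by
    linear_combination -key
  refine pos_of_mul_pos_left ?_ (mul_pos (mul_pos hn' hWpos) (sub_pos.2 hS)).le
  rw [hmul]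
  exact mul_pos (mul_pos hn' hSpos) (sub_pos.2 hW)

theorem sub_re_eq_mul_sub_im_of_eq_div {P S W : ℂ} {c : ℝ}
    (hc : c = (P.re - S.re) / (P.im - S.im)) (hS : S.im < P.im)
    (hW : W.re - c * W.im = S.re - c * S.im) :
    (P - W).re = c * (P - W).im ∧ (P - S).re = c * (P - S).im := by
  have hchord : P.re - S.re = c * (P.im - S.im) := by
    rw [hc, div_mul_cancel₀ _ (sub_pos.2 hS).ne']
  simp only [sub_re, sub_im]
  exact ⟨by linear_combination hchord - hW, hchord⟩

theorem stmt4_general (n : ℕ) (hn : 2 ≤ n) (b p : ℝ)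
    (a a' : ℝ) (I : Set ℝ) (hI : I = Set.Ioo a a')
    (him : ∀ s ∈ I, (((s : ℂ) + Complex.I) ^ n).im < (((p : ℂ) + (b : ℂ) * Complex.I) ^ n).im)
    (c : ℝ → ℝ)
    (hc : ∀ s ∈ I, c s =
      ((((p : ℂ) + (b : ℂ) * Complex.I) ^ n).re - (((s : ℂ) + Complex.I) ^ n).re) /
      ((((p : ℂ) + (b : ℂ) * Complex.I) ^ n).im - (((s : ℂ) + Complex.I) ^ n).im))
    (Ψ Ψx Ψs : ℝ → ℝ → ℝ)
    (hbd1 : ∀ s ∈ I, Ψ s 1 = s) (hbd2 : ∀ s ∈ I, Ψ s b = p)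
    (hdx : ∀ s ∈ I, ∀ x ∈ Set.Icc (1:ℝ) b, HasDerivAt (Ψ s) (Ψx s x) x)
    (hphase : ∀ s ∈ I, ∀ x ∈ Set.Icc (1:ℝ) b,
      arccot (Ψx s x) + ((n - 1 : ℕ) : ℝ) * arccot (Ψ s x / x) = arccot (c s))
    (hds : ∀ x ∈ Set.Icc (1:ℝ) b, ∀ s ∈ I, HasDerivAt (fun s => Ψ s x) (Ψs s x) s)
    (hstab : ∀ s ∈ I,
      0 < (((s : ℂ) + Complex.I) ^ (n - 1)).re - c s * (((s : ℂ) + Complex.I) ^ (n - 1)).im) :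
    ∀ x ∈ Set.Ico (1:ℝ) b,
      StrictMonoOn (fun s => Ψ s x) I ∧ ∀ s ∈ I, 0 < Ψs s x := by
  have hn₀ : 0 < n := by omega
  have hIo : IsOpen I := hI ▸ isOpen_Ioo
  have hpos : ∀ x ∈ Set.Ico (1 : ℝ) b, ∀ s ∈ I, 0 < Ψs s x := by
    intro x hx s hs
    have hxI : x ∈ Icc 1 b := Ico_subset_Icc_self hx
    refine pos_of_hasDerivAt_of_eventually_collinear (x := x) hn₀ (hds x hxI s hs) ?_ ?_
      (him s hs) ?_ (hstab s hs)
    · filter_upwards [hIo.mem_nhds hs] with σ hσ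
      have hlevel :=
        re_sub_mul_im_pow_eq_of_arccot_add hn₀ one_pos (hdx σ hσ) (hphase σ hσ) x hxI
      rw [hbd1 σ hσ, ofReal_one, one_mul] at hlevel
      exact sub_re_eq_mul_sub_im_of_eq_div (hc σ hσ) (him σ hσ) hlevel
    · simpa only [hbd2 s hs] using strictMonoOn_im_pow_of_arccot_add hn₀ one_pos (hdx s hs)
        (hphase s hs) hxI ⟨hx.1.trans hx.2.le, le_rfl⟩ hx.2
    · exact re_sub_mul_im_pow_pos_of_arccot_add (n - 1) (zero_lt_one.trans_le hx.1)
        (hphase s hs x hxI)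
  intro x hx
  have hdiff := hds x (Ico_subset_Icc_self hx)
  refine ⟨strictMonoOn_of_deriv_pos (hI ▸ convex_Ioo a a')
    (fun s hs => (hdiff s hs).continuousAt.continuousWithinAt) fun s hs => ?_, hpos x hx⟩
  rw [hIo.interior_eq] at hs
  rw [(hdiff s hs).deriv]
  exact hpos x hx s hs

/-- Monotonicity in `s` of the family `Ψ(s,·)` of constant-phase (dHYM) solutions with
`Ψ(s,1) = s`, `Ψ(s,b) = p`, under the stability condition
`Re((s+i)^{n−1}) − c_s·Im((s+i)^{n−1}) > 0`. -/
theorem stmt4 (n : ℕ) (hn : 2 ≤ n) (b p : ℝ) (hb : 1 < b)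
    (a a' : ℝ) (I : Set ℝ) (hI : I = Set.Ioo a a')
    (him : ∀ s ∈ I, (((s : ℂ) + Complex.I) ^ n).im < (((p : ℂ) + (b : ℂ) * Complex.I) ^ n).im)
    (c : ℝ → ℝ)
    (hc : ∀ s ∈ I, c s =
      ((((p : ℂ) + (b : ℂ) * Complex.I) ^ n).re - (((s : ℂ) + Complex.I) ^ n).re) /
      ((((p : ℂ) + (b : ℂ) * Complex.I) ^ n).im - (((s : ℂ) + Complex.I) ^ n).im))
    (Ψ Ψx Ψs : ℝ → ℝ → ℝ)
    (hbd1 : ∀ s ∈ I, Ψ s 1 = s) (hbd2 : ∀ s ∈ I, Ψ s b = p)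
    (hdx : ∀ s ∈ I, ∀ x ∈ Set.Icc (1:ℝ) b, HasDerivAt (Ψ s) (Ψx s x) x)
    (hphase : ∀ s ∈ I, ∀ x ∈ Set.Icc (1:ℝ) b,
      arccot (Ψx s x) + ((n - 1 : ℕ) : ℝ) * arccot (Ψ s x / x) = arccot (c s))
    (hds : ∀ x ∈ Set.Icc (1:ℝ) b, ∀ s ∈ I, HasDerivAt (fun s => Ψ s x) (Ψs s x) s)
    (hstab : ∀ s ∈ I,
      0 < (((s : ℂ) + Complex.I) ^ (n - 1)).re - c s * (((s : ℂ) + Complex.I) ^ (n - 1)).im) :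
    ∀ x ∈ Set.Ico (1:ℝ) b,
      StrictMonoOn (fun s => Ψ s x) I ∧ ∀ s ∈ I, 0 < Ψs s x :=
  stmt4_general n hn b p a a' I hI him c hc Ψ Ψx Ψs hbd1 hbd2 hdx hphase hds hstab
end

section
/- Let b > 1, p > 0, and let s be a real number with 0 < s < p/b and 3(p²b − s²) > b³ − 1. Define c_s := (p³ − 3pb² − s³ + 3s)/(3p²b − b³ − 3s² + 1). Then p − b·c_s > 0 and p − b·c_s > s − c_s; in particular p − b·c_s > max(s − c_s, 0). -/
/-!
Write `N = p³ − 3pb² − s³ + 3s` and `D = 3p²b − b³ − 3s² + 1 > 0`, so that both inequalities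
amount to the positivity of `pD − bN` and of `(p − s)D − (b − 1)N`. With `z = p + ib` and
`w = s + i` one has `N + iD = z³ − w³`, so `(p − s)D − (b − 1)N = Im(conj(z − w)·(z³ − w³))`
`= |z − w|² · Im(z² + zw + w²)`, which is positive. As a cubic in `p`, `pD − bN` is increasing
for `p ≥ sb` and equals `2sb(s² + 1)(b³ − 1) > 0` at `p = sb`.
-/

theorem mul_denom_sub_mul_numer_eq (p b s : ℝ) :
    p * (3 * p ^ 2 * b - b ^ 3 - 3 * s ^ 2 + 1) - b * (p ^ 3 - 3 * p * b ^ 2 - s ^ 3 + 3 * s) =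
      2 * s * b * (s ^ 2 + 1) * (b ^ 3 - 1) +
        (p - s * b) * (2 * b * (p ^ 2 + p * s * b + s ^ 2 * b ^ 2) + 2 * b ^ 3 - 3 * s ^ 2 + 1) := by
  ring

theorem sub_mul_denom_sub_sub_mul_numer_eq (p b s : ℝ) :
    (p - s) * (3 * p ^ 2 * b - b ^ 3 - 3 * s ^ 2 + 1) -
        (b - 1) * (p ^ 3 - 3 * p * b ^ 2 - s ^ 3 + 3 * s) =
      ((p - s) ^ 2 + (b - 1) ^ 2) * (2 * p * b + p + s * b + 2 * s) := by
  ring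

theorem mul_numer_lt_mul_denom {p b s : ℝ} (hb : 1 < b) (hs : 0 < s) (hsb : s * b < p) :
    b * (p ^ 3 - 3 * p * b ^ 2 - s ^ 3 + 3 * s) < p * (3 * p ^ 2 * b - b ^ 3 - 3 * s ^ 2 + 1) := by
  have hb0 : 0 < b := by linarith
  have hsb0 : 0 < s * b := by positivity
  have hb3 : 1 < b ^ 3 := one_lt_pow₀ hb (by norm_num)
  have hvalue : 0 < 2 * s * b * (s ^ 2 + 1) * (b ^ 3 - 1) := by
    have : 0 < b ^ 3 - 1 := by linarith
    positivity
  have hslope : 0 < 2 * b * (p ^ 2 + p * s * b + s ^ 2 * b ^ 2) + 2 * b ^ 3 - 3 * s ^ 2 + 1 := by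
    have hsq : 3 * (s * b) ^ 2 < p ^ 2 + p * s * b + s ^ 2 * b ^ 2 := by nlinarith
    nlinarith [mul_lt_mul_of_pos_left hb3 (by positivity : 0 < s ^ 2)]
  have hstep : 0 < (p - s * b) *
      (2 * b * (p ^ 2 + p * s * b + s ^ 2 * b ^ 2) + 2 * b ^ 3 - 3 * s ^ 2 + 1) :=
    mul_pos (by linarith) hslope
  linarith [mul_denom_sub_mul_numer_eq p b s]

theorem sub_one_mul_numer_lt_sub_mul_denom {p b s : ℝ} (hb : 1 < b) (hp : 0 < p) (hs : 0 < s) :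
    (b - 1) * (p ^ 3 - 3 * p * b ^ 2 - s ^ 3 + 3 * s) <
      (p - s) * (3 * p ^ 2 * b - b ^ 3 - 3 * s ^ 2 + 1) := by
  have hb0 : 0 < b := by linarith
  have hnorm : 0 < (p - s) ^ 2 + (b - 1) ^ 2 := by
    have : 0 < (b - 1) ^ 2 := by nlinarith
    positivity
  have hprod := mul_pos hnorm (by positivity : 0 < 2 * p * b + p + s * b + 2 * s)
  linarith [sub_mul_denom_sub_sub_mul_numer_eq p b s]

theorem mul_div_lt_of_mul_lt_mul {x y N D : ℝ} (hD : 0 < D) (h : y * N < x * D) :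
    y * (N / D) < x := by
  rwa [← mul_div_assoc, div_lt_iff₀ hD]

/-- For `0 < s < p/b` with `Im(α_s+iβ)³ > 0`, one has `p − b·c_s > 0` and
`p − b·c_s > s − c_s`, i.e. the class `α_s − c_s·β` is big on the blow-up of `CP³`. -/
theorem stmt5 (b p s : ℝ) (hb : 1 < b) (hp : 0 < p)
    (hs0 : 0 < s) (hs1 : s < p / b)
    (him : b ^ 3 - 1 < 3 * (p ^ 2 * b - s ^ 2)) :
    0 < p - b * ((p ^ 3 - 3 * p * b ^ 2 - s ^ 3 + 3 * s) /
        (3 * p ^ 2 * b - b ^ 3 - 3 * s ^ 2 + 1)) ∧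
    s - (p ^ 3 - 3 * p * b ^ 2 - s ^ 3 + 3 * s) /
        (3 * p ^ 2 * b - b ^ 3 - 3 * s ^ 2 + 1) <
      p - b * ((p ^ 3 - 3 * p * b ^ 2 - s ^ 3 + 3 * s) /
        (3 * p ^ 2 * b - b ^ 3 - 3 * s ^ 2 + 1)) ∧
    max (s - (p ^ 3 - 3 * p * b ^ 2 - s ^ 3 + 3 * s) /
        (3 * p ^ 2 * b - b ^ 3 - 3 * s ^ 2 + 1)) 0 <
      p - b * ((p ^ 3 - 3 * p * b ^ 2 - s ^ 3 + 3 * s) /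
        (3 * p ^ 2 * b - b ^ 3 - 3 * s ^ 2 + 1)) := by
  have hsb : s * b < p := (lt_div_iff₀ (by linarith)).mp hs1
  have hD : 0 < 3 * p ^ 2 * b - b ^ 3 - 3 * s ^ 2 + 1 := by linarith
  set c := (p ^ 3 - 3 * p * b ^ 2 - s ^ 3 + 3 * s) / (3 * p ^ 2 * b - b ^ 3 - 3 * s ^ 2 + 1)
  have hbc : b * c < p :=
    mul_div_lt_of_mul_lt_mul hD (mul_numer_lt_mul_denom hb hs0 hsb)
  have hbc_sub : (b - 1) * c < p - s :=
    mul_div_lt_of_mul_lt_mul hD (sub_one_mul_numer_lt_sub_mul_denom hb hp hs0)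
  have hpos : 0 < p - b * c := by linarith
  have hgt : s - c < p - b * c := by linarith
  exact ⟨hpos, hgt, max_lt hgt hpos⟩
end

section
/- Let b > 1, p > 0, and let s be a real number with p/b ≤ s ≤ p and 3(p²b − s²) > b³ − 1. Define F(s) := −s⁴ + s²(3p²b − b³ − 2) − 2sp(p² − 3b²) − (3p²b − b³ + 1) and c_s := (p³ − 3pb² − s³ + 3s)/(3p²b − b³ − 3s² + 1). Then F(s) > 0, and consequently s > c_s + √(c_s² + 1). -/
/-!
With `G = Im((p + ib)³ − (s + i)³)` and `N` its real part,
`F = Im((s − i)²((p + ib)³ − (s + i)³)) = (s² − 1)·G − 2s·N = (s² − 1 − 2s·c_s)·G`, so once `F > 0`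
and `G > 0` the number `s` lies beyond the larger root `c_s + √(c_s² + 1)` of `x² − 2c_s·x − 1`.

For `F > 0` fix the ratio `t = p/s`. Then `F` is a quadratic in `S = s²` with leading coefficient
`3t²b − 2t³ − 1 > 0` (as `t ≤ b`), and `G` is affine and increasing in `S`, vanishing at some `S₀`.
Expand `F` around `S₀` in powers of `G`: the constant term `F(S₀)` is a positive multiple of the
AM–GM defect `x³ + y³ + z³ − 3xyz` of `(p + bs, 2pb, 2s)`, which vanishes only for `b = 1`, and the
linear term `F'(S₀)` is nonnegative as soon as `p ≤ bs` and `s² ≤ p²b`.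
-/

namespace DHYM

/- `reCubeGap` and `imCubeGap` are the real and imaginary parts of `(p + ib)³ − (s + i)³`. -/
def reCubeGap (b p s : ℝ) : ℝ := p ^ 3 - 3 * p * b ^ 2 - s ^ 3 + 3 * s

def imCubeGap (b p s : ℝ) : ℝ := 3 * p ^ 2 * b - b ^ 3 - 3 * s ^ 2 + 1

def quartic (b p s : ℝ) : ℝ :=
  -s ^ 4 + s ^ 2 * (3 * p ^ 2 * b - b ^ 3 - 2) - 2 * s * p * (p ^ 2 - 3 * b ^ 2)
    - (3 * p ^ 2 * b - b ^ 3 + 1)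

/-- For `t = p/s` fixed, `s⁻⁴ · boundarySlope b p s` is `3(t²b − 1)` times the derivative of
`quartic` in `S = s²` at the zero of `imCubeGap`. -/
def boundarySlope (b p s : ℝ) : ℝ :=
  3 * p ^ 2 * b ^ 4 * s ^ 2 + 14 * p ^ 3 * b ^ 3 * s - 9 * p ^ 4 * b ^ 2 - 3 * p ^ 2 * b * s ^ 2
    + 4 * p ^ 3 * s + b ^ 3 * s ^ 4 - 18 * p * b ^ 2 * s ^ 3 + 8 * s ^ 4

theorem sum_cubes_sub_three_mul_pos {a b c : ℝ} (ha : 0 ≤ a) (hb : 0 ≤ b) (hc : 0 ≤ c)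
    (hne : a ≠ c ∨ b ≠ c) : 0 < a ^ 3 + b ^ 3 + c ^ 3 - 3 * a * b * c := by
  have hsq : 0 < (a - b) ^ 2 + (b - c) ^ 2 + (c - a) ^ 2 := by
    rcases hne with h | h
    · nlinarith [pow_two_pos_of_ne_zero (sub_ne_zero.2 h), sq_nonneg (a - b), sq_nonneg (b - c)]
    · nlinarith [pow_two_pos_of_ne_zero (sub_ne_zero.2 h), sq_nonneg (a - b), sq_nonneg (c - a)]
  have hsum : 0 < a + b + c := by
    nlinarith [mul_nonneg ha hb, mul_nonneg hb hc, mul_nonneg hc ha]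
  have hid : 2 * (a ^ 3 + b ^ 3 + c ^ 3 - 3 * a * b * c) =
      (a + b + c) * ((a - b) ^ 2 + (b - c) ^ 2 + (c - a) ^ 2) := by ring
  nlinarith [mul_pos hsum hsq]

theorem quartic_eq (b p s : ℝ) :
    quartic b p s = (s ^ 2 - 1) * imCubeGap b p s - 2 * s * reCubeGap b p s := by
  unfold quartic imCubeGap reCubeGap
  ring

theorem quartic_expansion (b p s : ℝ) :
    9 * (p ^ 2 * b - s ^ 2) ^ 2 * quartic b p s =
      2 * s * (b ^ 3 - 1) * ((p + b * s) ^ 3 + (2 * p * b) ^ 3 + (2 * s) ^ 3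
          - 3 * (p + b * s) * (2 * p * b) * (2 * s))
        + boundarySlope b p s * imCubeGap b p s
        + s * (3 * p ^ 2 * b * s - 2 * p ^ 3 - s ^ 3) * imCubeGap b p s ^ 2 := by
  unfold quartic boundarySlope imCubeGap
  ring

section

variable {b p s : ℝ}

theorem boundarySlope_nonneg (hb : 0 < b) (hp : 0 < p) (hs : 0 < s) (hps : p ≤ b * s)
    (hsp : s ^ 2 ≤ p ^ 2 * b) : 0 ≤ boundarySlope b p s := by
  have hdecomp : b * p ^ 2 * boundarySlope b p s =
      4 * s ^ 3 * (b * s - p) ^ 2 * (b * s + p)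
        + s * (b * p ^ 2 - s ^ 2) * (b * s - p) * (7 * b ^ 2 * s ^ 2 + 17 * b * s * p - 4 * p ^ 2)
        + b * (3 * b ^ 2 * s ^ 2 + 14 * b * s * p - 9 * p ^ 2) * (b * p ^ 2 - s ^ 2) ^ 2 := by
    unfold boundarySlope
    ring
  have hbs : 0 ≤ b * s - p := sub_nonneg.2 hps
  have hbp : 0 ≤ b * p ^ 2 - s ^ 2 := by linarith
  have hpp : p ^ 2 ≤ b * s * p := by nlinarith
  have h7 : 0 ≤ 7 * b ^ 2 * s ^ 2 + 17 * b * s * p - 4 * p ^ 2 := by nlinarith [mul_pos hb hs]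
  have h3 : 0 ≤ 3 * b ^ 2 * s ^ 2 + 14 * b * s * p - 9 * p ^ 2 := by nlinarith [mul_pos hb hs]
  have hprod : 0 ≤ b * p ^ 2 * boundarySlope b p s := by
    rw [hdecomp]
    have hcube := mul_nonneg (mul_nonneg (pow_pos hs 3).le (sq_nonneg (b * s - p)))
      (by linarith : 0 ≤ b * s + p)
    have hcross := mul_nonneg (mul_nonneg (mul_nonneg hs.le hbp) hbs) h7
    have hsquare := mul_nonneg (mul_nonneg hb.le h3) (sq_nonneg (b * p ^ 2 - s ^ 2))
    linarith
  exact nonneg_of_mul_nonneg_right hprod (by positivity)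

theorem quartic_pos (hb : 1 < b) (hp : 0 < p) (hps : p ≤ b * s) (hG : 0 < imCubeGap b p s) :
    0 < quartic b p s := by
  have hb0 : 0 < b := by linarith
  have hs : 0 < s := pos_of_mul_pos_right (hp.trans_le hps) hb0.le
  have hb3 : 0 < b ^ 3 - 1 := sub_pos.2 (one_lt_pow₀ hb three_ne_zero)
  have hsp : s ^ 2 < p ^ 2 * b := by unfold imCubeGap at hG; linarith
  have hlead : 0 < 3 * p ^ 2 * b * s - 2 * p ^ 3 - s ^ 3 := by nlinarith
  have hdefect : 0 < (p + b * s) ^ 3 + (2 * p * b) ^ 3 + (2 * s) ^ 3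
      - 3 * (p + b * s) * (2 * p * b) * (2 * s) := by
    refine sum_cubes_sub_three_mul_pos (by positivity) (by positivity) (by positivity) ?_
    by_contra! h
    have hzero : p * (b - 1) ^ 2 = 0 := by linear_combination h.1 + (b / 2 - 1) * h.2
    exact (mul_pos hp (pow_pos (sub_pos.2 hb) 2)).ne' hzero
  have hslope := boundarySlope_nonneg hb0 hp hs hps hsp.le
  have hscaled : 0 < 9 * (p ^ 2 * b - s ^ 2) ^ 2 * quartic b p s := by
    rw [quartic_expansion]
    have hconst := mul_pos (mul_pos (mul_pos two_pos hs) hb3) hdefect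
    have hlinear := mul_nonneg hslope hG.le
    have hquad := mul_pos (mul_pos hs hlead) (pow_pos hG 2)
    linarith
  exact pos_of_mul_pos_right hscaled (by positivity)

end

theorem add_sqrt_sq_add_one_lt {c s : ℝ} (hs : 0 < s) (h : 0 < s ^ 2 - 1 - 2 * s * c) :
    c + √(c ^ 2 + 1) < s := by
  have hsc : 0 < s - c := by nlinarith
  have : √(c ^ 2 + 1) < s - c := (Real.sqrt_lt' hsc).2 (by nlinarith)
  linarith

end DHYM

open DHYM in
theorem stmt6_general (b p s : ℝ) (hb : 1 < b) (hp : 0 < p)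
    (hs1 : p / b ≤ s)
    (him : b ^ 3 - 1 < 3 * (p ^ 2 * b - s ^ 2)) :
    0 < -s ^ 4 + s ^ 2 * (3 * p ^ 2 * b - b ^ 3 - 2) - 2 * s * p * (p ^ 2 - 3 * b ^ 2)
          - (3 * p ^ 2 * b - b ^ 3 + 1) ∧
    (p ^ 3 - 3 * p * b ^ 2 - s ^ 3 + 3 * s) / (3 * p ^ 2 * b - b ^ 3 - 3 * s ^ 2 + 1)
        + Real.sqrt (((p ^ 3 - 3 * p * b ^ 2 - s ^ 3 + 3 * s) /
            (3 * p ^ 2 * b - b ^ 3 - 3 * s ^ 2 + 1)) ^ 2 + 1) < s := by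
  have hb0 : 0 < b := by linarith
  have hps : p ≤ b * s := by rw [mul_comm]; exact (div_le_iff₀ hb0).1 hs1
  have hs : 0 < s := (div_pos hp hb0).trans_le hs1
  have hG : 0 < imCubeGap b p s := by unfold imCubeGap; linarith
  have hF : 0 < quartic b p s := quartic_pos hb hp hps hG
  refine ⟨hF, add_sqrt_sq_add_one_lt hs ?_⟩
  have hfactor : quartic b p s =
      (s ^ 2 - 1 - 2 * s * (reCubeGap b p s / imCubeGap b p s)) * imCubeGap b p s := by
    rw [quartic_eq]
    field_simp
  exact pos_of_mul_pos_left (hfactor ▸ hF) hG.le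

/-- For `p/b ≤ s ≤ p` with `Im(α_s+iβ)³ > 0`, the quartic `F` is positive at `s`, and
consequently `s > c_s + √(c_s² + 1)` (dHYM stability on `[p/b, p]`). -/
theorem stmt6 (b p s : ℝ) (hb : 1 < b) (hp : 0 < p)
    (hs1 : p / b ≤ s) (hs2 : s ≤ p)
    (him : b ^ 3 - 1 < 3 * (p ^ 2 * b - s ^ 2)) :
    0 < -s ^ 4 + s ^ 2 * (3 * p ^ 2 * b - b ^ 3 - 2) - 2 * s * p * (p ^ 2 - 3 * b ^ 2)
          - (3 * p ^ 2 * b - b ^ 3 + 1) ∧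
    (p ^ 3 - 3 * p * b ^ 2 - s ^ 3 + 3 * s) / (3 * p ^ 2 * b - b ^ 3 - 3 * s ^ 2 + 1)
        + Real.sqrt (((p ^ 3 - 3 * p * b ^ 2 - s ^ 3 + 3 * s) /
            (3 * p ^ 2 * b - b ^ 3 - 3 * s ^ 2 + 1)) ^ 2 + 1) < s :=
  stmt6_general b p s hb hp hs1 him
end

section
/- Let n ≥ 2 be an integer and b > 1. Let Q : [1,b] → ℝ be continuous with Q(1) = Q(b) = 0 and Q > 0 on (1,b). Let ψ : [1,b] × [0,∞) → ℝ be continuous, twice differentiable in x and once in t on (1,b] × (0,∞), and suppose ψ satisfies the cotangent flow equation ∂ψ/∂t(x,t) = Q(x)·csc²(θ(x,t))·( ψ''(x,t)/(1 + ψ'(x,t)²) + (n−1)·(x·ψ'(x,t) − ψ(x,t))/(x² + ψ(x,t)²) ) there, where ψ', ψ'' are derivatives in x and θ(x,t) := arccot(ψ'(x,t)) + (n−1)·arccot(ψ(x,t)/x). Assume that for every T > 0 there is δ > 0 with δ ≤ θ(x,t) ≤ π − δ for all (x,t) ∈ (1,b] × [0,T]. Let ψ̃ : [1,b] → ℝ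 be a C² function satisfying the ODE (x² + ψ̃(x)²)·ψ̃''(x) + (n−1)·(1 + ψ̃'(x)²)·(x·ψ̃'(x) − ψ̃(x)) = 0 on [1,b]. If ψ(x,0) ≤ ψ̃(x) for all x ∈ [1,b], ψ(1,t) ≤ ψ̃(1) and ψ(b,t) ≤ ψ̃(b) for all t ≥ 0, then ψ(x,t) ≤ ψ̃(x) for all (x,t) ∈ [1,b] × [0,∞). -/
open Set Filter Topology

theorem IsLocalMax.secondDeriv_nonpos {f f' : ℝ → ℝ} {a c : ℝ} (h : IsLocalMax f a)
    (hf : ∀ᶠ x in 𝓝 a, HasDerivAt f (f' x) x) (hf' : HasDerivAt f' c a) : c ≤ 0 := by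
  by_contra! hc
  -- For `c > 0` the second derivative test makes `a` a local minimum too, so `f` is locally
  -- constant and `c = 0`.
  have hderiv : deriv f =ᶠ[𝓝 a] f' := hf.mono fun x hx => hx.deriv
  have hmin : IsLocalMin f a :=
    isLocalMin_of_deriv_deriv_pos (by rwa [hderiv.deriv_eq, hf'.deriv]) h.deriv_eq_zero
      hf.self_of_nhds.continuousAt
  have hconst : f =ᶠ[𝓝 a] fun _ => f a := by
    filter_upwards [h, hmin] with x hmax hmin using le_antisymm hmax hmin
  have hzero : f' =ᶠ[𝓝 a] fun _ => 0 := by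
    filter_upwards [hconst.eventuallyEq_nhds, hf] with x hx hfx
    exact hfx.unique ((hasDerivAt_const x (f a)).congr_of_eventuallyEq hx)
  exact hc.ne' (hf'.unique ((hasDerivAt_const a 0).congr_of_eventuallyEq hzero))

theorem IsLocalMax.deriv_eq_and_secondDeriv_le {f g f' g' : ℝ → ℝ} {a f'' g'' : ℝ}
    (h : IsLocalMax (fun x => f x - g x) a) (hf : ∀ᶠ x in 𝓝 a, HasDerivAt f (f' x) x)
    (hg : ∀ᶠ x in 𝓝 a, HasDerivAt g (g' x) x) (hf' : HasDerivAt f' f'' a)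
    (hg' : HasDerivAt g' g'' a) : f' a = g' a ∧ f'' ≤ g'' := by
  have hfg : ∀ᶠ x in 𝓝 a, HasDerivAt (fun x => f x - g x) (f' x - g' x) x :=
    hf.and hg |>.mono fun x hx => hx.1.sub hx.2
  exact ⟨sub_eq_zero.1 (h.hasDerivAt_eq_zero hfg.self_of_nhds),
    sub_nonpos.1 (h.secondDeriv_nonpos hfg (hf'.sub hg'))⟩

theorem HasDerivAt.nonneg_of_isMaxOn_Icc {f : ℝ → ℝ} {d a t : ℝ} (hf : HasDerivAt f d t)
    (hat : a < t) (hmax : IsMaxOn f (Icc a t) t) : 0 ≤ d := by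
  have hcone : a - t ∈ posTangentConeAt (Icc a t) t :=
    sub_mem_posTangentConeAt_of_segment_subset (by rw [segment_symm, segment_eq_Icc hat.le])
  have hle := hmax.localize.hasFDerivWithinAt_nonpos hf.hasFDerivAt.hasFDerivWithinAt hcone
  simp only [ContinuousLinearMap.toSpanSingleton_apply, smul_eq_mul] at hle
  nlinarith

theorem nonpos_of_timeDeriv_neg_at_max {v vt : ℝ → ℝ → ℝ} {a b T : ℝ}
    (hv : ContinuousOn (fun p : ℝ × ℝ => v p.1 p.2) (Icc a b ×ˢ Icc 0 T))
    (hvt : ∀ x ∈ Ioo a b, ∀ t ∈ Ioc 0 T, HasDerivAt (v x) (vt x t) t)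
    (hinit : ∀ x ∈ Icc a b, v x 0 ≤ 0)
    (hleft : ∀ t ∈ Icc 0 T, v a t ≤ 0) (hright : ∀ t ∈ Icc 0 T, v b t ≤ 0)
    (hmax : ∀ x ∈ Ioo a b, ∀ t ∈ Ioc 0 T, 0 < v x t → IsMaxOn (v · t) (Icc a b) x →
      vt x t < 0) :
    ∀ x ∈ Icc a b, ∀ t ∈ Icc 0 T, v x t ≤ 0 := by
  intro x hx t ht
  obtain ⟨⟨x₀, t₀⟩, ⟨hx₀, ht₀⟩, hmax₀⟩ :=
    (isCompact_Icc.prod isCompact_Icc).exists_isMaxOn ⟨(x, t), hx, ht⟩ hv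
  have hle : v x t ≤ v x₀ t₀ := hmax₀ (show (x, t) ∈ _ from ⟨hx, ht⟩)
  refine hle.trans (not_lt.1 fun hpos => ?_)
  have hx₀' : x₀ ∈ Ioo a b := by
    refine ⟨hx₀.1.lt_of_ne ?_, hx₀.2.lt_of_ne ?_⟩ <;> rintro rfl
    exacts [(hleft t₀ ht₀).not_gt hpos, (hright t₀ ht₀).not_gt hpos]
  have ht₀' : t₀ ∈ Ioc 0 T :=
    ⟨ht₀.1.lt_of_ne (by rintro rfl; exact (hinit x₀ hx₀).not_gt hpos), ht₀.2⟩
  have hspace : IsMaxOn (v · t₀) (Icc a b) x₀ := fun y hy =>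
    hmax₀ (show (y, t₀) ∈ _ from ⟨hy, ht₀⟩)
  have htime : IsMaxOn (v x₀) (Icc 0 t₀) t₀ := fun s hs =>
    hmax₀ (show (x₀, s) ∈ _ from ⟨hx₀, hs.1, hs.2.trans ht₀.2⟩)
  exact (hmax x₀ hx₀' t₀ ht₀' hpos hspace).not_ge
    ((hvt x₀ hx₀' t₀ ht₀').nonneg_of_isMaxOn_Icc ht₀'.1 htime)

theorem nonpos_of_timeDeriv_le_mul_at_max {u ut : ℝ → ℝ → ℝ} {a b T K : ℝ}
    (hu : ContinuousOn (fun p : ℝ × ℝ => u p.1 p.2) (Icc a b ×ˢ Icc 0 T))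
    (hut : ∀ x ∈ Ioo a b, ∀ t ∈ Ioc 0 T, HasDerivAt (u x) (ut x t) t)
    (hinit : ∀ x ∈ Icc a b, u x 0 ≤ 0)
    (hleft : ∀ t ∈ Icc 0 T, u a t ≤ 0) (hright : ∀ t ∈ Icc 0 T, u b t ≤ 0)
    (hmax : ∀ x ∈ Ioo a b, ∀ t ∈ Ioc 0 T, 0 < u x t → IsMaxOn (u · t) (Icc a b) x →
      ut x t ≤ K * u x t) :
    ∀ x ∈ Icc a b, ∀ t ∈ Icc 0 T, u x t ≤ 0 := by
  set w : ℝ → ℝ := fun t => Real.exp (-(K + 1) * t)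
  have hw : ∀ t, HasDerivAt w (-(K + 1) * w t) t := fun t => by
    simpa [w, mul_comm] using ((hasDerivAt_id t).const_mul (-(K + 1))).exp
  have hwpos : ∀ t, 0 < w t := fun t => Real.exp_pos _
  have key := nonpos_of_timeDeriv_neg_at_max (v := fun x t => w t * u x t)
    (vt := fun x t => w t * (ut x t - (K + 1) * u x t)) (a := a) (b := b) (T := T)
    ((Real.continuous_exp.comp (continuous_const.mul continuous_snd)).continuousOn.mul hu)
    (fun x hx t ht => ((hw t).mul (hut x hx t ht)).congr_deriv (by ring))
    (fun x hx => mul_nonpos_of_nonneg_of_nonpos (hwpos 0).le (hinit x hx))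
    (fun t ht => mul_nonpos_of_nonneg_of_nonpos (hwpos t).le (hleft t ht))
    (fun t ht => mul_nonpos_of_nonneg_of_nonpos (hwpos t).le (hright t ht))
    (fun x hx t ht hpos hmaxw => by
      have hpos' : 0 < u x t := pos_of_mul_pos_right hpos (hwpos t).le
      have hmaxu : IsMaxOn (u · t) (Icc a b) x := fun y hy =>
        le_of_mul_le_mul_left (hmaxw hy) (hwpos t)
      have := hmax x hx t ht hpos' hmaxu
      exact mul_neg_of_pos_of_neg (hwpos t) (by linarith))
  exact fun x hx t ht => nonpos_of_mul_nonpos_right (key x hx t ht) (hwpos t)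

theorem abs_sub_div_sq_add_sq_sub_le {X p s₀ s₁ : ℝ} (hX : 1 ≤ X) :
    |(X * p - s₁) / (X ^ 2 + s₁ ^ 2) - (X * p - s₀) / (X ^ 2 + s₀ ^ 2)| ≤
      (1 + |p|) * |s₁ - s₀| := by
  have h₀ : 1 ≤ X ^ 2 + s₀ ^ 2 := by nlinarith
  have h₁ : 1 ≤ X ^ 2 + s₁ ^ 2 := by nlinarith
  set D := (X ^ 2 + s₀ ^ 2) * (X ^ 2 + s₁ ^ 2)
  have hD : 1 ≤ D := by nlinarith
  have hid : (X * p - s₁) / (X ^ 2 + s₁ ^ 2) - (X * p - s₀) / (X ^ 2 + s₀ ^ 2)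
      = (s₀ - s₁) * (X ^ 2 - s₀ * s₁ + p * (X * (s₀ + s₁))) / D := by
    field_simp; ring
  have hA : |X ^ 2 - s₀ * s₁| ≤ D :=
    abs_le_of_sq_le_sq (by nlinarith [sq_nonneg (X * (s₀ + s₁))]) (by positivity)
  have hB : |X * (s₀ + s₁)| ≤ D := by
    rw [abs_le]
    constructor <;> nlinarith [sq_nonneg (X + s₀), sq_nonneg (X + s₁), sq_nonneg (X - s₀),
      sq_nonneg (X - s₁)]
  have hnum : |X ^ 2 - s₀ * s₁ + p * (X * (s₀ + s₁))| ≤ (1 + |p|) * D :=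
    calc _ ≤ |X ^ 2 - s₀ * s₁| + |p| * |X * (s₀ + s₁)| := by
          rw [← abs_mul]; exact abs_add_le _ _
      _ ≤ _ := by nlinarith [abs_nonneg p]
  rw [hid, abs_div, abs_mul, abs_of_pos (by positivity : (0 : ℝ) < D), abs_sub_comm,
    div_le_iff₀ (by positivity)]
  calc |s₁ - s₀| * _ ≤ |s₁ - s₀| * ((1 + |p|) * D) := by gcongr
    _ = _ := by ring

theorem Real.sin_le_sin_of_le_of_le_pi_sub {δ θ : ℝ} (hδ : -(Real.pi / 2) ≤ δ) (h₁ : δ ≤ θ)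
    (h₂ : θ ≤ Real.pi - δ) : Real.sin δ ≤ Real.sin θ := by
  rcases le_or_gt θ (Real.pi / 2) with hθ | hθ
  · exact Real.sin_le_sin_of_le_of_le_pi_div_two hδ hθ h₁
  · rw [← Real.sin_pi_sub θ]
    exact Real.sin_le_sin_of_le_of_le_pi_div_two hδ (by linarith) (by linarith)

theorem cotangent_flow_speed_le {m q C θ δ X p P s₀ s₁ r r₀ : ℝ} (hm : 0 ≤ m) (hq : 0 ≤ q)
    (hqC : q ≤ C) (hδ : 0 < δ) (hθ₁ : δ ≤ θ) (hθ₂ : θ ≤ Real.pi - δ) (hX : 1 ≤ X)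
    (hp : |p| ≤ P) (hs : s₀ ≤ s₁) (hr : r ≤ r₀)
    (hODE : (X ^ 2 + s₀ ^ 2) * r₀ + m * (1 + p ^ 2) * (X * p - s₀) = 0) :
    q * (1 / Real.sin θ) ^ 2 * (r / (1 + p ^ 2) + m * (X * p - s₁) / (X ^ 2 + s₁ ^ 2)) ≤
      C * (1 / Real.sin δ) ^ 2 * m * (1 + P) * (s₁ - s₀) := by
  have hsinδ : 0 < Real.sin δ := Real.sin_pos_of_pos_of_lt_pi hδ (by linarith)
  have hsin : Real.sin δ ≤ Real.sin θ :=
    Real.sin_le_sin_of_le_of_le_pi_sub (by linarith [Real.pi_pos]) hθ₁ hθ₂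
  have hsinθ : 0 < Real.sin θ := hsinδ.trans_le hsin
  have hr₀ : r₀ / (1 + p ^ 2) = -(m * (X * p - s₀)) / (X ^ 2 + s₀ ^ 2) := by
    rw [div_eq_div_iff (by positivity) (by nlinarith)]
    linear_combination hODE
  have hbracket : r / (1 + p ^ 2) + m * (X * p - s₁) / (X ^ 2 + s₁ ^ 2) ≤
      m * ((1 + |p|) * (s₁ - s₀)) :=
    calc _ ≤ r₀ / (1 + p ^ 2) + m * (X * p - s₁) / (X ^ 2 + s₁ ^ 2) := by gcongr
      _ = m * ((X * p - s₁) / (X ^ 2 + s₁ ^ 2) - (X * p - s₀) / (X ^ 2 + s₀ ^ 2)) := by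
        rw [hr₀]; ring
      _ ≤ _ := by
        gcongr
        rw [← abs_of_nonneg (sub_nonneg.2 hs)]
        exact (le_abs_self _).trans (abs_sub_div_sq_add_sq_sub_le hX)
  have hs' : 0 ≤ s₁ - s₀ := sub_nonneg.2 hs
  have hC : 0 ≤ C := hq.trans hqC
  calc _ ≤ q * (1 / Real.sin θ) ^ 2 * (m * ((1 + |p|) * (s₁ - s₀))) := by gcongr
    _ ≤ C * (1 / Real.sin δ) ^ 2 * (m * ((1 + P) * (s₁ - s₀))) := by gcongr
    _ = _ := by ring

theorem stmt7_general (n : ℕ) (b : ℝ)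
    (Q : ℝ → ℝ)
    (hQcont : ContinuousOn Q (Set.Icc 1 b))
    (hQpos : ∀ x ∈ Set.Ioo (1:ℝ) b, 0 < Q x)
    (ψ ψx ψxx ψt : ℝ → ℝ → ℝ)
    (hψcont : ContinuousOn (fun p : ℝ × ℝ => ψ p.1 p.2) (Set.Icc 1 b ×ˢ Set.Ici 0))
    (hdx : ∀ x ∈ Set.Ioc (1:ℝ) b, ∀ t ∈ Set.Ioi (0:ℝ),
      HasDerivAt (fun y => ψ y t) (ψx x t) x)
    (hdxx : ∀ x ∈ Set.Ioc (1:ℝ) b, ∀ t ∈ Set.Ioi (0:ℝ),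
      HasDerivAt (fun y => ψx y t) (ψxx x t) x)
    (hdt : ∀ x ∈ Set.Ioc (1:ℝ) b, ∀ t ∈ Set.Ioi (0:ℝ),
      HasDerivAt (fun s => ψ x s) (ψt x t) t)
    (hflow : ∀ x ∈ Set.Ioc (1:ℝ) b, ∀ t ∈ Set.Ioi (0:ℝ),
      ψt x t = Q x * (1 / Real.sin (arccot (ψx x t) + ((n - 1 : ℕ) : ℝ) * arccot (ψ x t / x))) ^ 2 *
        (ψxx x t / (1 + (ψx x t) ^ 2) +
          ((n - 1 : ℕ) : ℝ) * (x * ψx x t - ψ x t) / (x ^ 2 + (ψ x t) ^ 2)))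
    (hphase : ∀ T > (0:ℝ), ∃ δ > (0:ℝ), ∀ x ∈ Set.Ioc (1:ℝ) b, ∀ t ∈ Set.Icc (0:ℝ) T,
      δ ≤ arccot (ψx x t) + ((n - 1 : ℕ) : ℝ) * arccot (ψ x t / x) ∧
      arccot (ψx x t) + ((n - 1 : ℕ) : ℝ) * arccot (ψ x t / x) ≤ Real.pi - δ)
    (ψ' ψ'x ψ'xx : ℝ → ℝ)
    (hψ'dx : ∀ x ∈ Set.Icc (1:ℝ) b, HasDerivAt ψ' (ψ'x x) x)
    (hψ'dxx : ∀ x ∈ Set.Icc (1:ℝ) b, HasDerivAt ψ'x (ψ'xx x) x)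
    (hODE : ∀ x ∈ Set.Icc (1:ℝ) b,
      (x ^ 2 + (ψ' x) ^ 2) * ψ'xx x +
        ((n - 1 : ℕ) : ℝ) * (1 + (ψ'x x) ^ 2) * (x * ψ'x x - ψ' x) = 0)
    (hinit : ∀ x ∈ Set.Icc (1:ℝ) b, ψ x 0 ≤ ψ' x)
    (hbd1 : ∀ t ∈ Set.Ici (0:ℝ), ψ 1 t ≤ ψ' 1)
    (hbdb : ∀ t ∈ Set.Ici (0:ℝ), ψ b t ≤ ψ' b) :
    ∀ x ∈ Set.Icc (1:ℝ) b, ∀ t ∈ Set.Ici (0:ℝ), ψ x t ≤ ψ' x := by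
  intro x hx t ht
  obtain ⟨δ, hδ, hθ⟩ := hphase (t + 1) (by linarith [mem_Ici.1 ht])
  obtain ⟨CQ, hCQ⟩ := isCompact_Icc.exists_bound_of_continuousOn hQcont
  obtain ⟨C₁, hC₁⟩ := isCompact_Icc.exists_bound_of_continuousOn (f := ψ'x)
    fun y hy => (hψ'dxx y hy).continuousAt.continuousWithinAt
  have hψ'cont : ContinuousOn ψ' (Icc 1 b) :=
    fun y hy => (hψ'dx y hy).continuousAt.continuousWithinAt
  refine sub_nonpos.1 <| nonpos_of_timeDeriv_le_mul_at_max (u := fun x t => ψ x t - ψ' x)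
    (T := t + 1) (K := CQ * (1 / Real.sin δ) ^ 2 * ((n - 1 : ℕ) : ℝ) * (1 + C₁))
    ((hψcont.mono (prod_mono_right Icc_subset_Ici_self)).sub
      (hψ'cont.comp continuousOn_fst fun p hp => hp.1))
    (fun y hy s hs => (hdt y (Ioo_subset_Ioc_self hy) s hs.1).sub_const (ψ' y))
    (fun y hy => sub_nonpos.2 (hinit y hy)) (fun s hs => sub_nonpos.2 (hbd1 s hs.1))
    (fun s hs => sub_nonpos.2 (hbdb s hs.1)) ?_ x hx t ⟨ht, by linarith⟩
  intro y hy s hs hpos hmax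
  have hy' : y ∈ Icc 1 b := Ioo_subset_Icc_self hy
  obtain ⟨h₁, h₂⟩ := (hmax.isLocalMax (Icc_mem_nhds hy.1 hy.2)).deriv_eq_and_secondDeriv_le
    (f := fun z => ψ z s)
    (eventually_of_mem (Ioo_mem_nhds hy.1 hy.2) fun z hz => hdx z (Ioo_subset_Ioc_self hz) s hs.1)
    (eventually_of_mem (Icc_mem_nhds hy.1 hy.2) hψ'dx)
    (hdxx y (Ioo_subset_Ioc_self hy) s hs.1) (hψ'dxx y hy')
  obtain ⟨hθ₁, hθ₂⟩ := hθ y (Ioo_subset_Ioc_self hy) s (Ioc_subset_Icc_self hs)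
  rw [hflow y (Ioo_subset_Ioc_self hy) s hs.1]
  rw [h₁] at hθ₁ hθ₂ ⊢
  exact cotangent_flow_speed_le (Nat.cast_nonneg _) (hQpos y hy).le
    ((le_abs_self _).trans (hCQ y hy')) hδ hθ₁ hθ₂ hy.1.le (hC₁ y hy') (sub_nonneg.1 hpos.le)
    h₂ (hODE y hy')

/-- Comparison principle along the Calabi-symmetry reduction of the dHYM cotangent
flow on the blow-up of `CP^n` at a point: a solution `ψ(x,t)` of the flow which starts
below a stationary (constant-phase) solution `ψ̃` and stays below it at the spatial
boundary remains below `ψ̃` for all time. Here `ψx, ψxx, ψt` denote the first and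
second spatial derivatives and the time derivative of `ψ`, and
`θ(x,t) = arccot(ψx) + (n−1)·arccot(ψ/x)` is the Lagrangian phase. -/
theorem stmt7 (n : ℕ) (hn : 2 ≤ n) (b : ℝ) (hb : 1 < b)
    (Q : ℝ → ℝ)
    (hQcont : ContinuousOn Q (Set.Icc 1 b))
    (hQ1 : Q 1 = 0) (hQb : Q b = 0)
    (hQpos : ∀ x ∈ Set.Ioo (1:ℝ) b, 0 < Q x)
    (ψ ψx ψxx ψt : ℝ → ℝ → ℝ)
    (hψcont : ContinuousOn (fun p : ℝ × ℝ => ψ p.1 p.2) (Set.Icc 1 b ×ˢ Set.Ici 0))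
    (hdx : ∀ x ∈ Set.Ioc (1:ℝ) b, ∀ t ∈ Set.Ioi (0:ℝ),
      HasDerivAt (fun y => ψ y t) (ψx x t) x)
    (hdxx : ∀ x ∈ Set.Ioc (1:ℝ) b, ∀ t ∈ Set.Ioi (0:ℝ),
      HasDerivAt (fun y => ψx y t) (ψxx x t) x)
    (hdt : ∀ x ∈ Set.Ioc (1:ℝ) b, ∀ t ∈ Set.Ioi (0:ℝ),
      HasDerivAt (fun s => ψ x s) (ψt x t) t)
    (hflow : ∀ x ∈ Set.Ioc (1:ℝ) b, ∀ t ∈ Set.Ioi (0:ℝ),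
      ψt x t = Q x * (1 / Real.sin (arccot (ψx x t) + ((n - 1 : ℕ) : ℝ) * arccot (ψ x t / x))) ^ 2 *
        (ψxx x t / (1 + (ψx x t) ^ 2) +
          ((n - 1 : ℕ) : ℝ) * (x * ψx x t - ψ x t) / (x ^ 2 + (ψ x t) ^ 2)))
    (hphase : ∀ T > (0:ℝ), ∃ δ > (0:ℝ), ∀ x ∈ Set.Ioc (1:ℝ) b, ∀ t ∈ Set.Icc (0:ℝ) T,
      δ ≤ arccot (ψx x t) + ((n - 1 : ℕ) : ℝ) * arccot (ψ x t / x) ∧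
      arccot (ψx x t) + ((n - 1 : ℕ) : ℝ) * arccot (ψ x t / x) ≤ Real.pi - δ)
    (ψ' ψ'x ψ'xx : ℝ → ℝ)
    (hψ'dx : ∀ x ∈ Set.Icc (1:ℝ) b, HasDerivAt ψ' (ψ'x x) x)
    (hψ'dxx : ∀ x ∈ Set.Icc (1:ℝ) b, HasDerivAt ψ'x (ψ'xx x) x)
    (hψ'C2 : ContinuousOn ψ'xx (Set.Icc 1 b))
    (hODE : ∀ x ∈ Set.Icc (1:ℝ) b,
      (x ^ 2 + (ψ' x) ^ 2) * ψ'xx x +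
        ((n - 1 : ℕ) : ℝ) * (1 + (ψ'x x) ^ 2) * (x * ψ'x x - ψ' x) = 0)
    (hinit : ∀ x ∈ Set.Icc (1:ℝ) b, ψ x 0 ≤ ψ' x)
    (hbd1 : ∀ t ∈ Set.Ici (0:ℝ), ψ 1 t ≤ ψ' 1)
    (hbdb : ∀ t ∈ Set.Ici (0:ℝ), ψ b t ≤ ψ' b) :
    ∀ x ∈ Set.Icc (1:ℝ) b, ∀ t ∈ Set.Ici (0:ℝ), ψ x t ≤ ψ' x :=
  stmt7_general n b Q hQcont hQpos ψ ψx ψxx ψt hψcont hdx hdxx hdt hflow hphase ψ' ψ'x ψ'xx hψ'dx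
    hψ'dxx hODE hinit hbd1 hbdb
end

section
/- Let n ≥ 2 be an integer and b > 1. Let Q : [1,b] → ℝ be continuous with Q(1) = Q(b) = 0 and Q > 0 on (1,b). Let ψ : [1,b] × [0,∞) → ℝ be smooth on (1,b) × (0,∞), continuous together with g := ∂ψ/∂t on [1,b] × [0,∞), and suppose ψ satisfies the cotangent flow equation ∂ψ/∂t(x,t) = Q(x)·csc²(θ(x,t))·( ψ''(x,t)/(1 + ψ'(x,t)²) + (n−1)·(x·ψ'(x,t) − ψ(x,t))/(x² + ψ(x,t)²) ) on (1,b) × (0,∞), where ψ', ψ'' are derivatives in x and θ(x,t) := arccot(ψ'(x,t)) + (n−1)·arccot(ψ(x,t)/x). Assume: g(1,t) = g(b,t) = 0 for all t ≥ 0; for every T > 0 there is δ > 0 with δ ≤ θ(x,t) ≤ π − δ on (1,b) × [0,T]; and for every T > 0 the functions ψ, ∂ψ/∂x, ∂ψ/∂t are bounded on (1,b) × [0,T]. If g(x,0) ≥ 0 for all x ∈ [1,b], then g(x,t) = ∂ψ/∂t(x,t) ≥ 0 for all (x,t) ∈ [1,b] × [0,∞). -/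
open Set Filter

lemma arccot_antitone : Antitone arccot := fun a c hac => by
  unfold arccot
  have := Real.arctan_strictMono.monotone hac
  linarith

lemma hasDerivAt_arccot (x : ℝ) : HasDerivAt arccot (-(1 / (1 + x ^ 2))) x := by
  exact (Real.hasDerivAt_arctan x).const_sub (Real.pi / 2)

lemma sin_ge_of_mem {δ θ : ℝ} (hδ : 0 < δ) (h1 : δ ≤ θ) (h2 : θ ≤ Real.pi - δ) :
    Real.sin δ ≤ Real.sin θ := by
  have hδ2 : δ ≤ Real.pi / 2 := by linarith
  rcases le_or_gt θ (Real.pi / 2) with h | h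
  · exact Real.sin_le_sin_of_le_of_le_pi_div_two (by linarith) h h1
  · rw [← Real.sin_pi_sub θ]
    exact Real.sin_le_sin_of_le_of_le_pi_div_two (by linarith) (by linarith) (by linarith)

lemma mono_aux {f g : ℝ → ℝ} {t1 t2 c : ℝ} (h12 : t1 ≤ t2)
    (hc : ContinuousOn f (Icc t1 t2))
    (hd : ∀ τ ∈ Ioo t1 t2, HasDerivAt f (g τ) τ)
    (hg : ∀ τ ∈ Ioo t1 t2, c ≤ g τ) :
    c * (t2 - t1) ≤ f t2 - f t1 := by
  have hmono : MonotoneOn (fun τ => f τ - c * τ) (Icc t1 t2) := by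
    apply monotoneOn_of_deriv_nonneg (convex_Icc t1 t2)
    · exact hc.sub (continuousOn_const.mul continuousOn_id)
    · intro τ hτ
      rw [interior_Icc] at hτ
      have hdc : HasDerivAt (fun τ => f τ - c * τ) (g τ - c) τ := by
        exact ((hd τ hτ).sub ((hasDerivAt_id τ).const_mul c)).congr_deriv (by simp)
      exact hdc.differentiableAt.differentiableWithinAt
    · intro τ hτ
      rw [interior_Icc] at hτ
      have hdc : HasDerivAt (fun τ => f τ - c * τ) (g τ - c) τ := by
        exact ((hd τ hτ).sub ((hasDerivAt_id τ).const_mul c)).congr_deriv (by simp)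
      rw [hdc.deriv]
      have := hg τ hτ
      linarith
  have h := hmono (left_mem_Icc.2 h12) (right_mem_Icc.2 h12) h12
  simp only at h
  nlinarith

lemma abs_sub_le_aux {f g : ℝ → ℝ} {t1 t2 c : ℝ} (h12 : t1 ≤ t2)
    (hc : ContinuousOn f (Icc t1 t2))
    (hd : ∀ τ ∈ Ioo t1 t2, HasDerivAt f (g τ) τ)
    (hg : ∀ τ ∈ Ioo t1 t2, |g τ| ≤ c) :
    |f t2 - f t1| ≤ c * (t2 - t1) := by
  have h1 := mono_aux (c := -c) h12 hc hd (fun τ hτ => neg_le_of_abs_le (hg τ hτ))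
  have h2 := mono_aux (f := fun τ => -f τ) (g := fun τ => -g τ) (c := -c) h12 hc.neg
    (fun τ hτ => (hd τ hτ).neg)
    (fun τ hτ => by have := abs_le.1 (hg τ hτ); simp only [neg_le_neg_iff]; linarith)
  beta_reduce at h2
  rw [abs_le]
  constructor <;> linarith

lemma second_deriv_nonneg_of_isLocalMin {f f1 : ℝ → ℝ} {a c : ℝ}
    (hmin : IsLocalMin f a)
    (hf1 : ∀ᶠ x in nhds a, HasDerivAt f (f1 x) x)
    (hf2 : HasDerivAt f1 c a) : 0 ≤ c := by
  by_contra hc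
  push_neg at hc
  have ha : f1 a = 0 := hmin.hasDerivAt_eq_zero hf1.self_of_nhds
  have hslope := hasDerivAt_iff_tendsto_slope.1 hf2
  have h1 : ∀ᶠ x in nhdsWithin a (Ioi a), f1 x < 0 := by
    have h2 : ∀ᶠ x in nhdsWithin a (Ioi a), slope f1 a x < 0 := by
      have := hslope.mono_left (nhdsWithin_mono a (fun x (hx : x ∈ Ioi a) => ne_of_gt hx))
      exact this.eventually_lt_const hc
    filter_upwards [h2, self_mem_nhdsWithin] with x hx (hxa : x ∈ Ioi a)
    rw [slope_def_field, ha, sub_zero] at hx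
    by_contra h
    push_neg at h
    have : 0 ≤ f1 x / (x - a) := div_nonneg h (by linarith [hxa.out])
    linarith
  have h3 : ∀ᶠ x in nhdsWithin a (Ioi a),
      f1 x < 0 ∧ HasDerivAt f (f1 x) x ∧ f a ≤ f x := by
    filter_upwards [h1, (hf1.and hmin).filter_mono nhdsWithin_le_nhds] with x hx1 hx2
    exact ⟨hx1, hx2.1, hx2.2⟩
  obtain ⟨u, hu, hsub⟩ := mem_nhdsGT_iff_exists_Ioc_subset.1 h3
  have hau : a < u := hu
  have hfd : ∀ x ∈ Ioc a u, f1 x < 0 ∧ HasDerivAt f (f1 x) x ∧ f a ≤ f x := fun x hx => hsub hx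
  have hanti : StrictAntiOn f (Icc a u) := by
    apply strictAntiOn_of_deriv_neg (convex_Icc a u)
    · intro x hx
      rcases eq_or_lt_of_le hx.1 with h | h
      · exact h ▸ hf1.self_of_nhds.continuousAt.continuousWithinAt
      · exact ((hfd x ⟨h, hx.2⟩).2.1.continuousAt).continuousWithinAt
    · intro x hx
      rw [interior_Icc] at hx
      rw [(hfd x ⟨hx.1, le_of_lt hx.2⟩).2.1.deriv]
      exact (hfd x ⟨hx.1, le_of_lt hx.2⟩).1
  have := hanti (left_mem_Icc.2 (le_of_lt hau)) (right_mem_Icc.2 (le_of_lt hau)) hau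
  have := (hfd u ⟨hau, le_refl u⟩).2.2
  linarith

lemma deriv_nonpos_of_isMinOn_left {f : ℝ → ℝ} {f' a t0 : ℝ} (ha : a < t0)
    (hmin : ∀ t ∈ Icc a t0, f t0 ≤ f t)
    (hd : HasDerivAt f f' t0) : f' ≤ 0 := by
  have h := (hd.hasDerivWithinAt (s := Iio t0))
  have hs := hasDerivWithinAt_iff_tendsto_slope.1 h
  have hIio : Iio t0 \ {t0} = Iio t0 := by
    ext x; simp (config := {contextual := true}) [lt_iff_le_and_ne]
  rw [hIio] at hs
  refine le_of_tendsto hs ?_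
  filter_upwards [Ioo_mem_nhdsLT_of_mem (⟨ha, le_refl t0⟩ : t0 ∈ Ioc a t0)] with x hx
  rw [slope_def_field]
  have h1 : f t0 ≤ f x := hmin x ⟨le_of_lt hx.1, le_of_lt hx.2⟩
  have h2 : x - t0 < 0 := by linarith [hx.2]
  exact div_nonpos_of_nonneg_of_nonpos (by linarith) (by linarith)

set_option maxHeartbeats 1000000 in
/-- Monotonicity along the Calabi-symmetry reduction of the dHYM cotangent flow on
the blow-up of `CP^n` at a point: if the time derivative `g = ∂ψ/∂t` is nonnegative
initially and vanishes at the spatial boundary, it stays nonnegative for all time.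
Here `ψx, ψxx` denote first and second spatial derivatives, `g = ψt` the time
derivative, and `θ(x,t) = arccot(ψx) + (n−1)·arccot(ψ/x)` the Lagrangian phase. -/
theorem stmt8 (n : ℕ) (hn : 2 ≤ n) (b : ℝ) (hb : 1 < b)
    (Q : ℝ → ℝ)
    (hQcont : ContinuousOn Q (Set.Icc 1 b))
    (hQ1 : Q 1 = 0) (hQb : Q b = 0)
    (hQpos : ∀ x ∈ Set.Ioo (1:ℝ) b, 0 < Q x)
    (ψ ψx ψxx g : ℝ → ℝ → ℝ)
    (hsmooth : ContDiffOn ℝ (⊤ : ℕ∞) (fun p : ℝ × ℝ => ψ p.1 p.2) (Set.Ioo 1 b ×ˢ Set.Ioi 0))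
    (hψcont : ContinuousOn (fun p : ℝ × ℝ => ψ p.1 p.2) (Set.Icc 1 b ×ˢ Set.Ici 0))
    (hgcont : ContinuousOn (fun p : ℝ × ℝ => g p.1 p.2) (Set.Icc 1 b ×ˢ Set.Ici 0))
    (hdx : ∀ x ∈ Set.Ioo (1:ℝ) b, ∀ t ∈ Set.Ioi (0:ℝ),
      HasDerivAt (fun y => ψ y t) (ψx x t) x)
    (hdxx : ∀ x ∈ Set.Ioo (1:ℝ) b, ∀ t ∈ Set.Ioi (0:ℝ),
      HasDerivAt (fun y => ψx y t) (ψxx x t) x)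
    (hdt : ∀ x ∈ Set.Ioo (1:ℝ) b, ∀ t ∈ Set.Ioi (0:ℝ),
      HasDerivAt (fun s => ψ x s) (g x t) t)
    (hflow : ∀ x ∈ Set.Ioo (1:ℝ) b, ∀ t ∈ Set.Ioi (0:ℝ),
      g x t = Q x * (1 / Real.sin (arccot (ψx x t) + ((n - 1 : ℕ) : ℝ) * arccot (ψ x t / x))) ^ 2 *
        (ψxx x t / (1 + (ψx x t) ^ 2) +
          ((n - 1 : ℕ) : ℝ) * (x * ψx x t - ψ x t) / (x ^ 2 + (ψ x t) ^ 2)))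
    (hg1 : ∀ t ∈ Set.Ici (0:ℝ), g 1 t = 0)
    (hgb : ∀ t ∈ Set.Ici (0:ℝ), g b t = 0)
    (hphase : ∀ T > (0:ℝ), ∃ δ > (0:ℝ), ∀ x ∈ Set.Ioo (1:ℝ) b, ∀ t ∈ Set.Icc (0:ℝ) T,
      δ ≤ arccot (ψx x t) + ((n - 1 : ℕ) : ℝ) * arccot (ψ x t / x) ∧
      arccot (ψx x t) + ((n - 1 : ℕ) : ℝ) * arccot (ψ x t / x) ≤ Real.pi - δ)
    (hbdd : ∀ T > (0:ℝ), ∃ M : ℝ, ∀ x ∈ Set.Ioo (1:ℝ) b, ∀ t ∈ Set.Icc (0:ℝ) T,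
      |ψ x t| ≤ M ∧ |ψx x t| ≤ M ∧ |g x t| ≤ M)
    (hinit : ∀ x ∈ Set.Icc (1:ℝ) b, 0 ≤ g x 0) :
    ∀ x ∈ Set.Icc (1:ℝ) b, ∀ t ∈ Set.Ici (0:ℝ), 0 ≤ g x t := by
  intro x hx t ht
  rcases eq_or_lt_of_le hx.1 with hx1 | hx1
  · exact le_of_eq (by rw [← hx1]; exact (hg1 t ht).symm)
  rcases eq_or_lt_of_le hx.2 with hxb | hxb
  · exact le_of_eq (by rw [hxb]; exact (hgb t ht).symm)
  have hxI : x ∈ Set.Ioo (1:ℝ) b := ⟨hx1, hxb⟩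
  rcases eq_or_lt_of_le (Set.mem_Ici.1 ht) with ht0 | ht0
  · rw [← ht0]; exact hinit x hx
  set T := t with hTdef
  have hT0 : 0 < T := ht0
  -- constants
  obtain ⟨M, hM⟩ := hbdd (T + 2) (by linarith)
  have hxmid : (1 + b)/2 ∈ Set.Ioo (1:ℝ) b := ⟨by linarith, by linarith⟩
  have h02 : (0:ℝ) ∈ Set.Icc (0:ℝ) (T+2) := ⟨le_refl 0, by linarith⟩
  have hM0 : 0 ≤ M := le_trans (abs_nonneg _) (hM _ hxmid 0 h02).1
  obtain ⟨δ, hδpos, hδ⟩ := hphase (T + 2) (by linarith)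
  have hδ2 : δ ≤ Real.pi / 2 := by
    obtain ⟨h1, h2⟩ := hδ _ hxmid 0 h02
    linarith
  have hsδ : 0 < Real.sin δ :=
    Real.sin_pos_of_pos_of_lt_pi hδpos (by linarith [Real.pi_pos])
  obtain ⟨QM, hQM⟩ := (isCompact_Icc).exists_bound_of_continuousOn hQcont
  have hQM0 : 0 ≤ QM :=
    le_trans (norm_nonneg _) (hQM 1 (Set.left_mem_Icc.2 (le_of_lt hb)))
  set m : ℝ := ((n - 1 : ℕ) : ℝ) with hmdef
  have hm1 : (1:ℝ) ≤ m := by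
    rw [hmdef]; exact_mod_cast Nat.one_le_iff_ne_zero.2 (by omega)
  have hm0 : (0:ℝ) ≤ m := by linarith
  set sδ : ℝ := Real.sin δ with hsδdef
  set B1 : ℝ := m * ((b + 1) * M) with hB1def
  set B2 : ℝ := m * (1 + 2 * M * ((b + 1) * M)) with hB2def
  have hB1nn : 0 ≤ B1 := by
    apply mul_nonneg hm0; nlinarith
  have hB2nn : 0 ≤ B2 := by
    apply mul_nonneg hm0; nlinarith
  set C : ℝ := 2 * m * sδ⁻¹ ^ 3 * (M + 2 * QM * B1) + QM * sδ⁻¹ ^ 2 * B2 with hCdef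
  have hsδinv : 0 < sδ⁻¹ := inv_pos.2 hsδ
  have hC0 : 0 ≤ C := by
    apply add_nonneg
    · apply mul_nonneg (by positivity) (by nlinarith [mul_nonneg hQM0 hB1nn])
    · apply mul_nonneg (by positivity) hB2nn
  set K : ℝ := C + 1 with hKdef
  have hK0 : 0 < K := by rw [hKdef]; linarith
  -- uniform continuity of g on the compact slab
  have hgUC : ∀ ε > (0:ℝ), ∃ δ' > (0:ℝ), ∀ x' ∈ Set.Icc (1:ℝ) b, ∀ τ1 ∈ Set.Icc (0:ℝ) (T+2),
      ∀ x'' ∈ Set.Icc (1:ℝ) b, ∀ τ2 ∈ Set.Icc (0:ℝ) (T+2),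
      max |x' - x''| |τ1 - τ2| < δ' → |g x' τ1 - g x'' τ2| < ε := by
    intro ε hε
    have hcomp : IsCompact (Set.Icc (1:ℝ) b ×ˢ Set.Icc (0:ℝ) (T+2)) :=
      isCompact_Icc.prod isCompact_Icc
    have hsub : (Set.Icc (1:ℝ) b ×ˢ Set.Icc (0:ℝ) (T+2)) ⊆ (Set.Icc 1 b ×ˢ Set.Ici 0) :=
      fun p hp => Set.mem_prod.2 ⟨(Set.mem_prod.1 hp).1, (Set.mem_prod.1 hp).2.1⟩
    have huc := hcomp.uniformContinuousOn_of_continuous (hgcont.mono hsub)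
    rw [Metric.uniformContinuousOn_iff] at huc
    obtain ⟨δ', hδ', h⟩ := huc ε hε
    refine ⟨δ', hδ', ?_⟩
    intro x' hx' τ1 hτ1 x'' hx'' τ2 hτ2 hdist
    have hh := h (x', τ1) (Set.mem_prod.2 ⟨hx', hτ1⟩) (x'', τ2) (Set.mem_prod.2 ⟨hx'', hτ2⟩)
      (by rw [Prod.dist_eq, Real.dist_eq, Real.dist_eq]; exact hdist)
    rwa [Real.dist_eq] at hh
  -- continuity helpers for ψ
  have hψX : ∀ tt : ℝ, 0 ≤ tt → ContinuousOn (fun y => ψ y tt) (Set.Icc 1 b) := by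
    intro tt htt
    have hcm : ContinuousOn (fun y : ℝ => ((y, tt) : ℝ × ℝ)) (Set.Icc 1 b) :=
      (continuous_id.prodMk continuous_const).continuousOn
    exact hψcont.comp hcm (fun y hy => Set.mem_prod.2 ⟨hy, htt⟩)
  have hψT : ∀ x' ∈ Set.Icc (1:ℝ) b, ∀ t1 t2 : ℝ, 0 ≤ t1 →
      ContinuousOn (fun τ => ψ x' τ) (Set.Icc t1 t2) := by
    intro x' hx' t1 t2 ht1
    have hcm : ContinuousOn (fun τ : ℝ => ((x', τ) : ℝ × ℝ)) (Set.Icc t1 t2) :=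
      (continuous_const.prodMk continuous_id).continuousOn
    exact hψcont.comp hcm (fun τ hτ => Set.mem_prod.2 ⟨hx', le_trans ht1 hτ.1⟩)
  -- Step B : ψ is constant in time on the lateral boundary
  have hbdry : ∀ x0, x0 ∈ Set.Icc (1:ℝ) b → x0 ∈ closure (Set.Ioo (1:ℝ) b) →
      (∀ τ, 0 ≤ τ → g x0 τ = 0) → ∀ t1 t2 : ℝ, 0 ≤ t1 → t1 ≤ t2 → t2 ≤ T + 2 →
      ψ x0 t2 = ψ x0 t1 := by
    intro x0 hx0 hx0cl hg0 t1 t2 ht1 h12 h2T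
    rcases eq_or_lt_of_le h12 with h | h
    · rw [h]
    have key : ∀ η > (0:ℝ), |ψ x0 t2 - ψ x0 t1| ≤ η * (t2 - t1) := by
      intro η hη
      obtain ⟨δ', hδ'pos, hUC⟩ := hgUC η hη
      haveI hne : (nhdsWithin x0 (Set.Ioo (1:ℝ) b)).NeBot :=
        mem_closure_iff_nhdsWithin_neBot.1 hx0cl
      have htd : Filter.Tendsto (fun y => |ψ y t2 - ψ y t1|) (nhdsWithin x0 (Set.Ioo 1 b))
          (nhds |ψ x0 t2 - ψ x0 t1|) := by
        have h2 := ((hψX t2 (by linarith)).sub (hψX t1 ht1)) x0 hx0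
        exact (h2.mono Set.Ioo_subset_Icc_self).tendsto.abs
      refine le_of_tendsto htd ?_
      have hball : ∀ᶠ y in nhdsWithin x0 (Set.Ioo (1:ℝ) b), |y - x0| < δ' := by
        apply Filter.Eventually.filter_mono nhdsWithin_le_nhds
        filter_upwards [Metric.ball_mem_nhds x0 hδ'pos] with y hy
        rwa [Metric.mem_ball, Real.dist_eq] at hy
      filter_upwards [hball, self_mem_nhdsWithin] with y hy hyI
      apply abs_sub_le_aux h12 (hψT y (Set.Ioo_subset_Icc_self hyI) t1 t2 ht1)
      · intro τ hτ
        exact hdt y hyI τ (lt_of_le_of_lt ht1 hτ.1)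
      · intro τ hτ
        have h0 := hg0 τ (by linarith [hτ.1])
        have hd := hUC y (Set.Ioo_subset_Icc_self hyI) τ
          ⟨by linarith [hτ.1], by linarith [hτ.2]⟩ x0 hx0 τ
          ⟨by linarith [hτ.1], by linarith [hτ.2]⟩
          (by rw [sub_self, abs_zero, max_eq_left (abs_nonneg _)]; exact hy)
        rw [h0, sub_zero] at hd
        exact le_of_lt hd
    have habs : |ψ x0 t2 - ψ x0 t1| ≤ 0 := by
      by_contra hpos
      push_neg at hpos
      have hk := key (|ψ x0 t2 - ψ x0 t1| / (2 * (t2 - t1)))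
        (div_pos hpos (by linarith))
      have h2 : |ψ x0 t2 - ψ x0 t1| / (2 * (t2 - t1)) * (t2 - t1)
          = |ψ x0 t2 - ψ x0 t1| / 2 := by
        have hne : t2 - t1 ≠ 0 := by linarith
        field_simp
      linarith
    have h0 := abs_nonneg (ψ x0 t2 - ψ x0 t1)
    have : ψ x0 t2 - ψ x0 t1 = 0 := abs_eq_zero.1 (le_antisymm habs h0)
    linarith
  -- slab : for small times g is ≥ -ε
  have hslab : ∀ ε > (0:ℝ), ∃ s0 > (0:ℝ), s0 ≤ 1 ∧
      ∀ x' ∈ Set.Icc (1:ℝ) b, ∀ τ, 0 ≤ τ → τ ≤ s0 → -ε ≤ g x' τ := by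
    intro ε hε
    obtain ⟨δ', hδ'pos, hUC⟩ := hgUC ε hε
    refine ⟨min (δ'/2) 1, by positivity, min_le_right _ _, ?_⟩
    intro x' hx' τ h0τ hτ
    have hτ1 : τ ≤ 1 := le_trans hτ (min_le_right _ _)
    have hτδ : τ ≤ δ'/2 := le_trans hτ (min_le_left _ _)
    have hd := hUC x' hx' τ ⟨h0τ, by linarith⟩ x' hx' 0 ⟨le_refl 0, by linarith⟩
      (by rw [sub_self, abs_zero, sub_zero, max_eq_right (abs_nonneg _), abs_of_nonneg h0τ]; linarith)
    have h0 := hinit x' hx'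
    have := abs_lt.1 hd
    linarith [this.1]
  -- Main comparison claim
  have claimD : ∀ ε > (0:ℝ), ∃ s1 > (0:ℝ), s1 ≤ 1 ∧ ∀ s, 0 < s → s ≤ s1 →
      ∀ x' ∈ Set.Icc (1:ℝ) b, ∀ t' ∈ Set.Icc (0:ℝ) T,
      0 < Real.exp (-(K * t')) * (ψ x' (t' + s) - ψ x' t') + 2 * ε * s := by
    intro ε hε
    obtain ⟨s0, hs0pos, hs01, hslab0⟩ := hslab ε hε
    refine ⟨s0, hs0pos, hs01, ?_⟩
    intro s hs hss1
    by_contra hcon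
    push_neg at hcon
    obtain ⟨x₁, hx₁, t₁, ht₁, hW₁⟩ := hcon
    have hs1 : s ≤ 1 := le_trans hss1 hs01
    set W : ℝ × ℝ → ℝ :=
      fun p => Real.exp (-(K * p.2)) * (ψ p.1 (p.2 + s) - ψ p.1 p.2) + 2 * ε * s with hWdef
    set D : Set (ℝ × ℝ) := Set.Icc (1:ℝ) b ×ˢ Set.Icc (0:ℝ) T with hDdef
    have hDc : IsCompact D := isCompact_Icc.prod isCompact_Icc
    have hDne : D.Nonempty :=
      ⟨(1, 0), Set.mem_prod.2 ⟨Set.left_mem_Icc.2 (le_of_lt hb),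
        Set.left_mem_Icc.2 (le_of_lt hT0)⟩⟩
    have hWc : ContinuousOn W D := by
      have hmap : Continuous (fun p : ℝ × ℝ => ((p.1, p.2 + s) : ℝ × ℝ)) :=
        continuous_fst.prodMk (continuous_snd.add continuous_const)
      have h1 : ContinuousOn (fun p : ℝ × ℝ => ψ p.1 (p.2 + s)) D := by
        apply hψcont.comp hmap.continuousOn
        intro p hp
        have hp' := Set.mem_prod.1 hp
        exact Set.mem_prod.2 ⟨hp'.1, by
          have := hp'.2.1; simp only [Set.mem_Ici]; linarith⟩
      have h2 : ContinuousOn (fun p : ℝ × ℝ => ψ p.1 p.2) D :=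
        hψcont.mono (fun p hp => Set.mem_prod.2 ⟨(Set.mem_prod.1 hp).1, (Set.mem_prod.1 hp).2.1⟩)
      have h3 : Continuous (fun p : ℝ × ℝ => Real.exp (-(K * p.2))) :=
        Real.continuous_exp.comp ((continuous_const.mul continuous_snd).neg)
      exact (h3.continuousOn.mul (h1.sub h2)).add continuousOn_const
    obtain ⟨⟨x0, t0⟩, hmemD, hminOn⟩ := hDc.exists_isMinOn hDne hWc
    have hmin : ∀ p ∈ D, W (x0, t0) ≤ W p := fun p hp => hminOn hp
    have hmemD' := Set.mem_prod.1 hmemD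
    have hx0 : x0 ∈ Set.Icc (1:ℝ) b := hmemD'.1
    have ht0' : t0 ∈ Set.Icc (0:ℝ) T := hmemD'.2
    have hWneg : W (x0, t0) ≤ 0 :=
      le_trans (hmin (x₁, t₁) (Set.mem_prod.2 ⟨hx₁, ht₁⟩)) hW₁
    -- lateral boundary excluded
    have hεs : 0 < 2 * ε * s := by positivity
    have hlat : ∀ x', x' ∈ Set.Icc (1:ℝ) b → x' ∈ closure (Set.Ioo (1:ℝ) b) →
        (∀ τ, 0 ≤ τ → g x' τ = 0) → ∀ t' ∈ Set.Icc (0:ℝ) T, 0 < W (x', t') := by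
      intro x' h1 h2 h3 t' ht'
      have heq := hbdry x' h1 h2 h3 t' (t' + s) ht'.1 (by linarith)
        (by linarith [ht'.2])
      simp only [hWdef]
      rw [heq, sub_self, mul_zero, zero_add]
      exact hεs
    have hclos : ∀ y : ℝ, y ∈ Set.Icc (1:ℝ) b → y ∈ closure (Set.Ioo (1:ℝ) b) := by
      intro y hy
      rw [closure_Ioo (by linarith : (1:ℝ) ≠ b)]
      exact hy
    have hx0I : x0 ∈ Set.Ioo (1:ℝ) b := by
      rcases eq_or_lt_of_le hx0.1 with h | h
      · exfalso
        have := hlat 1 (Set.left_mem_Icc.2 (le_of_lt hb))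
          (hclos 1 (Set.left_mem_Icc.2 (le_of_lt hb)))
          (fun τ hτ => hg1 τ hτ) t0 ht0'
        rw [h] at this
        linarith
      rcases eq_or_lt_of_le hx0.2 with h' | h'
      · exfalso
        have := hlat b (Set.right_mem_Icc.2 (le_of_lt hb))
          (hclos b (Set.right_mem_Icc.2 (le_of_lt hb)))
          (fun τ hτ => hgb τ hτ) t0 ht0'
        rw [← h'] at this
        linarith
      exact ⟨h, h'⟩
    -- bottom excluded
    have ht0pos : 0 < t0 := by
      rcases eq_or_lt_of_le ht0'.1 with h | h
      · exfalso
        have hmono := mono_aux (f := fun τ => ψ x0 τ) (g := fun τ => g x0 τ) (c := -ε)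
          (le_of_lt hs) (hψT x0 hx0 0 s (le_refl 0))
          (fun τ hτ => hdt x0 hx0I τ hτ.1)
          (fun τ hτ => hslab0 x0 hx0 τ (le_of_lt hτ.1) (le_trans (le_of_lt hτ.2) hss1))
        have hW0 : W (x0, t0) = ψ x0 s - ψ x0 0 + 2 * ε * s := by
          simp only [hWdef, ← h, mul_zero, neg_zero, Real.exp_zero, one_mul, zero_add]
        rw [hW0] at hWneg
        have hp : 0 < ε * s := mul_pos hε hs
        linarith only [hmono, hWneg, hp]
      · exact h
    have ht0T : t0 ≤ T := ht0'.2
    have hts : 0 < t0 + s := by linarith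
    set u := ψ x0 (t0 + s) with hu
    set v := ψ x0 t0 with hv
    set E0 := Real.exp (-(K * t0)) with hE0
    have hE0pos : 0 < E0 := Real.exp_pos _
    have hWx0 : W (x0, t0) = E0 * (u - v) + 2 * ε * s := rfl
    have huv : u - v < 0 := by
      rw [hWx0] at hWneg
      by_contra hcc
      push_neg at hcc
      have h1 : 0 ≤ E0 * (u - v) := mul_nonneg hE0pos.le hcc
      have hp : 0 < ε * s := mul_pos hε hs
      linarith only [hWneg, h1, hp]
    have huv' : u < v := by linarith
    -- spatial first derivative vanishes, second derivative nonneg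
    have hlocmin : IsLocalMin (fun y => ψ y (t0 + s) - ψ y t0) x0 := by
      have hev : ∀ᶠ y in nhds x0, (fun y => ψ y (t0 + s) - ψ y t0) x0
          ≤ (fun y => ψ y (t0 + s) - ψ y t0) y := by
        filter_upwards [isOpen_Ioo.mem_nhds hx0I] with y hy
        have h1 := hmin (y, t0) (Set.mem_prod.2 ⟨Set.Ioo_subset_Icc_self hy, ht0'⟩)
        rw [hWx0] at h1
        simp only [hWdef] at h1
        have h2 : E0 * (u - v) ≤ E0 * (ψ y (t0 + s) - ψ y t0) := by linarith
        have := le_of_mul_le_mul_left h2 hE0pos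
        simpa using this
      exact hev
    have hdu : HasDerivAt (fun y => ψ y (t0 + s)) (ψx x0 (t0 + s)) x0 := hdx x0 hx0I (t0 + s) hts
    have hdv : HasDerivAt (fun y => ψ y t0) (ψx x0 t0) x0 := hdx x0 hx0I t0 ht0pos
    have hqeq : ψx x0 (t0 + s) = ψx x0 t0 := by
      have := hlocmin.hasDerivAt_eq_zero (hdu.sub hdv)
      linarith [this]
    set q := ψx x0 t0 with hq
    have hxx2 : 0 ≤ ψxx x0 (t0 + s) - ψxx x0 t0 := by
      apply second_deriv_nonneg_of_isLocalMin hlocmin ?_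
        ((hdxx x0 hx0I (t0 + s) hts).sub (hdxx x0 hx0I t0 ht0pos))
      filter_upwards [isOpen_Ioo.mem_nhds hx0I] with y hy
      exact (hdx y hy (t0 + s) hts).sub (hdx y hy t0 ht0pos)
    -- time derivative inequality
    have hgt : g x0 (t0 + s) - g x0 t0 ≤ K * (u - v) := by
      have hd1 : HasDerivAt (fun τ => ψ x0 (τ + s)) (g x0 (t0 + s)) t0 := by
        have h := (hdt x0 hx0I (t0 + s) hts).comp t0 ((hasDerivAt_id t0).add_const s)
        simp at h; exact h
      have hd2 : HasDerivAt (fun τ => ψ x0 τ) (g x0 t0) t0 := hdt x0 hx0I t0 ht0pos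
      have hd3 : HasDerivAt (fun τ => Real.exp (-(K * τ))) (-K * E0) t0 := by
        have hlin : HasDerivAt (fun τ : ℝ => -(K * τ)) (-K) t0 := by
          exact ((hasDerivAt_id t0).const_mul K).neg.congr_deriv (by simp)
        have h := (Real.hasDerivAt_exp (-(K * t0))).comp t0 hlin
        exact h.congr_deriv (by rw [hE0]; ring)
      have hd4 : HasDerivAt (fun τ => Real.exp (-(K * τ)) * (ψ x0 (τ + s) - ψ x0 τ) + 2 * ε * s)
          ((-K * E0) * (u - v) + E0 * (g x0 (t0 + s) - g x0 t0)) t0 := by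
        have h := (hd3.mul (hd1.sub hd2)).add_const (2 * ε * s)
        simpa [hE0, hu, hv] using h
      have hle := deriv_nonpos_of_isMinOn_left ht0pos ?_ hd4
      · have h5 : E0 * (g x0 (t0 + s) - g x0 t0) ≤ E0 * (K * (u - v)) := by
          linarith only [hle]
        exact le_of_mul_le_mul_left h5 hE0pos
      · intro τ hτ
        have h1 := hmin (x0, τ) (Set.mem_prod.2 ⟨hx0, ⟨hτ.1, le_trans hτ.2 ht0T⟩⟩)
        rw [hWx0] at h1
        simpa [hWdef, hE0, hu, hv] using h1
    -- flow equation manipulation at the minimum point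
    set c₀ := Q x0 with hc₀def
    have hc₀pos : 0 < c₀ := hQpos x0 hx0I
    have hc₀QM : |c₀| ≤ QM := by
      have h := hQM x0 hx0
      rwa [Real.norm_eq_abs] at h
    set rv := ψxx x0 t0 with hrvdef
    set ru := ψxx x0 (t0 + s) with hrudef
    set θf : ℝ → ℝ := fun p => arccot q + m * arccot (p / x0) with hθfdef
    set Sf : ℝ → ℝ := fun p => (Real.sin (θf p))⁻¹ ^ 2 with hSfdef
    set Brf : ℝ → ℝ := fun p =>
      rv / (1 + q ^ 2) + m * (x0 * q - p) / (x0 ^ 2 + p ^ 2) with hBrfdef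
    set φ : ℝ → ℝ := fun p => c₀ * Sf p * Brf p with hφdef
    have hx0pos : (1:ℝ) < x0 := hx0I.1
    have hflowv : g x0 t0 = φ v := by
      have h := hflow x0 hx0I t0 ht0pos
      rw [← hc₀def, ← hq, ← hv, ← hrvdef] at h
      simp only [hφdef, hSfdef, hBrfdef, hθfdef, one_div] at h ⊢
      exact h
    have hflowu : g x0 (t0 + s)
        = c₀ * Sf u * (ru / (1 + q ^ 2) + m * (x0 * q - u) / (x0 ^ 2 + u ^ 2)) := by
      have h := hflow x0 hx0I (t0 + s) hts
      rw [hqeq] at h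
      rw [← hc₀def, ← hu, ← hrudef] at h
      simp only [hSfdef, hθfdef, one_div] at h ⊢
      exact h
    -- phase bounds
    have hphu := hδ x0 hx0I (t0 + s) ⟨by linarith, by linarith⟩
    have hphv := hδ x0 hx0I t0 ⟨by linarith, by linarith⟩
    rw [hqeq] at hphu
    rw [← hu] at hphu
    rw [← hq, ← hv] at hphv
    have hθu : δ ≤ θf u ∧ θf u ≤ Real.pi - δ := by
      simpa only [hθfdef] using hphu
    have hθv : δ ≤ θf v ∧ θf v ≤ Real.pi - δ := by
      simpa only [hθfdef] using hphv
    have hθmem : ∀ p ∈ Set.Icc u v, δ ≤ θf p ∧ θf p ≤ Real.pi - δ := by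
      intro p hp
      have h1 : arccot (v / x0) ≤ arccot (p / x0) :=
        arccot_antitone ((div_le_div_iff_of_pos_right (by linarith : (0:ℝ) < x0)).2 hp.2)
      have h2 : arccot (p / x0) ≤ arccot (u / x0) :=
        arccot_antitone ((div_le_div_iff_of_pos_right (by linarith : (0:ℝ) < x0)).2 hp.1)
      constructor
      · have h3 : θf v ≤ θf p := by
          simp only [hθfdef]
          have := mul_le_mul_of_nonneg_left h1 hm0
          linarith
        linarith [hθv.1]
      · have h3 : θf p ≤ θf u := by
          simp only [hθfdef]
          have := mul_le_mul_of_nonneg_left h2 hm0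
          linarith
        linarith [hθu.2]
    have hsinb : ∀ p ∈ Set.Icc u v, sδ ≤ Real.sin (θf p) := by
      intro p hp
      rw [hsδdef]
      exact sin_ge_of_mem hδpos (hθmem p hp).1 (hθmem p hp).2
    have hsinpos : ∀ p ∈ Set.Icc u v, 0 < Real.sin (θf p) :=
      fun p hp => lt_of_lt_of_le hsδ (hsinb p hp)
    -- derivative of φ
    set dθ : ℝ → ℝ := fun p => m * (-(1 / (1 + (p / x0) ^ 2)) * (1 / x0)) with hdθdef
    set dS : ℝ → ℝ := fun p =>
      2 * (Real.sin (θf p))⁻¹ ^ 1 * (-(Real.cos (θf p) * dθ p) / Real.sin (θf p) ^ 2) with hdSdef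
    set dBr : ℝ → ℝ := fun p =>
      (m * -1 * (x0 ^ 2 + p ^ 2) - m * (x0 * q - p) * (2 * p)) / (x0 ^ 2 + p ^ 2) ^ 2 with hdBrdef
    set φD : ℝ → ℝ := fun p => c₀ * dS p * Brf p + c₀ * Sf p * dBr p with hφDdef
    have hdenpos : ∀ p : ℝ, (1:ℝ) ≤ x0 ^ 2 + p ^ 2 := by
      intro p
      have h1 : (1:ℝ) ≤ x0 ^ 2 := by nlinarith only [hx0pos, sq_nonneg (x0 - 1)]
      linarith only [h1, sq_nonneg p]
    have hφdiff : ∀ p ∈ Set.Icc u v, HasDerivAt φ (φD p) p := by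
      intro p hp
      have hsne : Real.sin (θf p) ≠ 0 := ne_of_gt (hsinpos p hp)
      have hθd : HasDerivAt θf (dθ p) p := by
        have h1 : HasDerivAt (fun y : ℝ => y / x0) (1 / x0) p := by
          simpa using (hasDerivAt_id p).div_const x0
        have h2 : HasDerivAt (fun y : ℝ => arccot (y / x0))
            (-(1 / (1 + (p / x0) ^ 2)) * (1 / x0)) p :=
          by have h2' := (hasDerivAt_arccot (p / x0)).comp p h1; exact h2'
        have h3 := (h2.const_mul m).const_add (arccot q)
        simpa only [hθfdef, hdθdef] using h3
      have hSd : HasDerivAt Sf (dS p) p := by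
        have h3 : HasDerivAt (fun y => Real.sin (θf y)) (Real.cos (θf p) * dθ p) p :=
          (Real.hasDerivAt_sin (θf p)).comp p hθd
        have h5 := (h3.inv hsne).pow 2
        rw [hSfdef, hdSdef]
        convert h5 using 1 <;> (try push_cast) <;> (try simp only [Pi.inv_apply]) <;> (try ring) <;> rfl
      have hBrd : HasDerivAt Brf (dBr p) p := by
        have h6 : HasDerivAt (fun y : ℝ => m * (x0 * q - y)) (m * -1) p := by
          simpa using ((hasDerivAt_id p).const_sub (x0 * q)).const_mul m
        have h7 : HasDerivAt (fun y : ℝ => x0 ^ 2 + y ^ 2) (2 * p) p := by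
          have h := (hasDerivAt_pow 2 p).const_add (x0 ^ 2)
          norm_num at h
          exact h.const_add (x0 ^ 2)
        have h8 : (x0 ^ 2 + p ^ 2) ≠ 0 := ne_of_gt (lt_of_lt_of_le zero_lt_one (hdenpos p))
        have h9 := (h6.div h7 h8).const_add (rv / (1 + q ^ 2))
        rw [hBrfdef, hdBrdef]
        exact h9
      have h10 := (hSd.const_mul c₀).mul hBrd
      rw [hφdef, hφDdef]
      exact h10
    obtain ⟨ξ, hξmem, hξslope⟩ := exists_hasDerivAt_eq_slope φ φD huv'
      (fun p hp => (hφdiff p hp).continuousAt.continuousWithinAt)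
      (fun p hp => hφdiff p (Set.Ioo_subset_Icc_self hp))
    have hξI : ξ ∈ Set.Icc u v := Set.Ioo_subset_Icc_self hξmem
    have hφuv : φ v - φ u = φD ξ * (v - u) := by
      rw [hξslope]
      rw [div_mul_cancel₀]
      linarith only [huv']
    -- pointwise bounds
    have hMu : |u| ≤ M := (hM x0 hx0I (t0 + s) ⟨by linarith, by linarith⟩).1
    have hMv : |v| ≤ M := (hM x0 hx0I t0 ⟨by linarith, by linarith⟩).1
    have hMq : |q| ≤ M := (hM x0 hx0I t0 ⟨by linarith, by linarith⟩).2.1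
    have hMgv : |g x0 t0| ≤ M := (hM x0 hx0I t0 ⟨by linarith, by linarith⟩).2.2
    have hMξ : |ξ| ≤ M := by
      rw [abs_le] at hMu hMv ⊢
      exact ⟨by linarith [hξI.1, hMu.1], by linarith [hξI.2, hMv.2]⟩
    have hxb0 : x0 ≤ b := hx0.2
    have htri : ∀ a p : ℝ, |a - p| ≤ |a| + |p| := by
      intro a p
      have h := abs_add_le a (-p)
      rwa [abs_neg, ← sub_eq_add_neg] at h
    have hnum1 : ∀ p : ℝ, |p| ≤ M → |m * (x0 * q - p)| ≤ B1 := by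
      intro p hpM
      rw [abs_mul, abs_of_nonneg hm0, hB1def]
      apply mul_le_mul_of_nonneg_left ?_ hm0
      have h1 : |x0 * q - p| ≤ |x0| * |q| + |p| := by
        have := htri (x0 * q) p
        rwa [abs_mul] at this
      have hx0abs : |x0| ≤ b := by
        rw [abs_of_pos (by linarith only [hx0pos])]
        exact hxb0
      have h2 : |x0| * |q| ≤ b * M :=
        mul_le_mul hx0abs hMq (abs_nonneg q) (by linarith only [hb])
      linarith only [h1, h2, hpM]
    have habsB : ∀ p : ℝ, |p| ≤ M → |m * (x0 * q - p) / (x0 ^ 2 + p ^ 2)| ≤ B1 := by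
      intro p hpM
      rw [abs_div, abs_of_pos (lt_of_lt_of_le zero_lt_one (hdenpos p))]
      calc |m * (x0 * q - p)| / (x0 ^ 2 + p ^ 2) ≤ |m * (x0 * q - p)| :=
            div_le_self (abs_nonneg _) (hdenpos p)
        _ ≤ B1 := hnum1 p hpM
    -- bound on A = c₀ rv/(1+q²)
    have hsvne : Real.sin (θf v) ≠ 0 :=
      ne_of_gt (hsinpos v (Set.right_mem_Icc.2 (le_of_lt huv')))
    have hAeq : c₀ * (rv / (1 + q ^ 2)) = g x0 t0 * Real.sin (θf v) ^ 2
        - c₀ * (m * (x0 * q - v) / (x0 ^ 2 + v ^ 2)) := by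
      rw [hflowv, hφdef]
      simp only [hSfdef, hBrfdef]
      have hq2 : (1:ℝ) + q ^ 2 ≠ 0 := by positivity
      field_simp
      ring
    have hA : |c₀ * (rv / (1 + q ^ 2))| ≤ M + QM * B1 := by
      rw [hAeq]
      have h1 : |g x0 t0 * Real.sin (θf v) ^ 2| ≤ M := by
        rw [abs_mul]
        have h2 : |Real.sin (θf v) ^ 2| ≤ 1 := by
          rw [abs_of_nonneg (sq_nonneg _)]
          exact Real.sin_sq_le_one _
        have h4 := mul_le_mul hMgv h2 (abs_nonneg _) hM0
        linarith only [h4]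
      have h3 : |c₀ * (m * (x0 * q - v) / (x0 ^ 2 + v ^ 2))| ≤ QM * B1 := by
        rw [abs_mul]
        exact mul_le_mul hc₀QM (habsB v hMv) (abs_nonneg _) hQM0
      calc |g x0 t0 * Real.sin (θf v) ^ 2 - c₀ * (m * (x0 * q - v) / (x0 ^ 2 + v ^ 2))|
          ≤ |g x0 t0 * Real.sin (θf v) ^ 2| + |c₀ * (m * (x0 * q - v) / (x0 ^ 2 + v ^ 2))| :=
            htri _ _
        _ ≤ M + QM * B1 := by linarith
    -- bounds at ξ
    have hsξ : sδ ≤ Real.sin (θf ξ) := hsinb ξ hξI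
    have hsξpos : 0 < Real.sin (θf ξ) := hsinpos ξ hξI
    have hinvξ : |(Real.sin (θf ξ))⁻¹| ≤ sδ⁻¹ := by
      rw [abs_of_pos (inv_pos.2 hsξpos)]
      exact inv_anti₀ hsδ hsξ
    have hSξ : |Sf ξ| ≤ sδ⁻¹ ^ 2 := by
      rw [hSfdef]
      simp only
      rw [abs_pow]
      have := pow_le_pow_left₀ (abs_nonneg _) hinvξ 2
      simpa using this
    have hdθξ : |dθ ξ| ≤ m := by
      rw [hdθdef]
      simp only
      have h1 : (0:ℝ) < 1 + (ξ / x0) ^ 2 := by positivity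
      have h2 : 1 / (1 + (ξ / x0) ^ 2) ≤ 1 := by
        rw [div_le_one h1]
        nlinarith only [sq_nonneg (ξ / x0)]
      have h3 : 1 / x0 ≤ 1 := by
        rw [div_le_one (by linarith only [hx0pos])]
        linarith only [hx0pos]
      have h4 : (0:ℝ) ≤ 1 / x0 := by positivity
      have h5 : (0:ℝ) ≤ 1 / (1 + (ξ / x0) ^ 2) := by positivity
      rw [abs_mul, abs_of_nonneg hm0, abs_mul, abs_neg,
        abs_of_nonneg h5, abs_of_nonneg h4]
      have h6 : 1 / (1 + (ξ / x0) ^ 2) * (1 / x0) ≤ 1 :=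
        mul_le_one₀ h2 h4 h3
      nlinarith only [h6, hm0, hm1]
    have hfrac : |-(Real.cos (θf ξ) * dθ ξ) / Real.sin (θf ξ) ^ 2| ≤ m * sδ⁻¹ ^ 2 := by
      rw [abs_div, abs_neg, abs_mul]
      have h1 : |Real.cos (θf ξ)| * |dθ ξ| ≤ m := by
        have hc1 : |Real.cos (θf ξ)| ≤ 1 := Real.abs_cos_le_one _
        have := mul_le_mul hc1 hdθξ (abs_nonneg _) zero_le_one
        linarith only [this]
      have h2 : sδ ^ 2 ≤ |Real.sin (θf ξ) ^ 2| := by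
        rw [abs_of_nonneg (sq_nonneg _)]
        nlinarith only [hsξ, hsδ]
      have h3 : |Real.cos (θf ξ)| * |dθ ξ| / |Real.sin (θf ξ) ^ 2| ≤ m / sδ ^ 2 := by
        apply div_le_div₀ (by linarith only [hm0]) h1 (by positivity) h2
      calc |Real.cos (θf ξ)| * |dθ ξ| / |Real.sin (θf ξ) ^ 2| ≤ m / sδ ^ 2 := h3
        _ = m * sδ⁻¹ ^ 2 := by rw [div_eq_mul_inv, inv_pow]
    have hdSξ : |dS ξ| ≤ 2 * m * sδ⁻¹ ^ 3 := by
      rw [hdSdef]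
      simp only
      rw [abs_mul, abs_mul, pow_one]
      have h1 : |(2:ℝ)| = 2 := by norm_num
      rw [h1]
      have h2 := mul_le_mul (mul_le_mul_of_nonneg_left hinvξ (by norm_num : (0:ℝ) ≤ 2))
        hfrac (abs_nonneg _) (by positivity)
      calc 2 * |(Real.sin (θf ξ))⁻¹| * |-(Real.cos (θf ξ) * dθ ξ) / Real.sin (θf ξ) ^ 2|
          ≤ 2 * sδ⁻¹ * (m * sδ⁻¹ ^ 2) := h2
        _ = 2 * m * sδ⁻¹ ^ 3 := by ring
    have hdBrξ : |dBr ξ| ≤ B2 := by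
      have hden := hdenpos ξ
      have hdpos : (0:ℝ) < x0 ^ 2 + ξ ^ 2 := lt_of_lt_of_le zero_lt_one hden
      have hsplit : dBr ξ = -(m / (x0 ^ 2 + ξ ^ 2))
          - m * (x0 * q - ξ) * (2 * ξ) / (x0 ^ 2 + ξ ^ 2) ^ 2 := by
        rw [hdBrdef]
        field_simp
      have hb1 : m / (x0 ^ 2 + ξ ^ 2) ≤ m := div_le_self hm0 hden
      have hb1' : 0 ≤ m / (x0 ^ 2 + ξ ^ 2) := by positivity
      have hb2 : |m * (x0 * q - ξ) * (2 * ξ) / (x0 ^ 2 + ξ ^ 2) ^ 2| ≤ B1 * (2 * M) := by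
        rw [abs_div, abs_of_pos (by positivity : (0:ℝ) < (x0 ^ 2 + ξ ^ 2) ^ 2)]
        have hnum : |m * (x0 * q - ξ) * (2 * ξ)| ≤ B1 * (2 * M) := by
          rw [abs_mul]
          apply mul_le_mul (hnum1 ξ hMξ) ?_ (abs_nonneg _) hB1nn
          rw [abs_mul, (by norm_num : |(2:ℝ)| = 2)]
          linarith only [hMξ, abs_nonneg ξ]
        have hd2 : (1:ℝ) ≤ (x0 ^ 2 + ξ ^ 2) ^ 2 := by
          nlinarith only [hdenpos ξ]
        calc |m * (x0 * q - ξ) * (2 * ξ)| / (x0 ^ 2 + ξ ^ 2) ^ 2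
            ≤ |m * (x0 * q - ξ) * (2 * ξ)| := div_le_self (abs_nonneg _) hd2
          _ ≤ B1 * (2 * M) := hnum
      rw [hsplit]
      have htr : |-(m / (x0 ^ 2 + ξ ^ 2)) - m * (x0 * q - ξ) * (2 * ξ) / (x0 ^ 2 + ξ ^ 2) ^ 2|
          ≤ |m / (x0 ^ 2 + ξ ^ 2)| + |m * (x0 * q - ξ) * (2 * ξ) / (x0 ^ 2 + ξ ^ 2) ^ 2| := by
        have := htri (-(m / (x0 ^ 2 + ξ ^ 2))) (m * (x0 * q - ξ) * (2 * ξ) / (x0 ^ 2 + ξ ^ 2) ^ 2)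
        rwa [abs_neg] at this
      rw [abs_of_nonneg hb1'] at htr
      have : B2 = m + B1 * (2 * M) := by rw [hB2def, hB1def]; ring
      linarith only [htr, hb1, hb2, this]
    have hcBrξ : |c₀ * Brf ξ| ≤ M + 2 * QM * B1 := by
      have hsplit : c₀ * Brf ξ = c₀ * (rv / (1 + q ^ 2))
          + c₀ * (m * (x0 * q - ξ) / (x0 ^ 2 + ξ ^ 2)) := by
        rw [hBrfdef]
        ring
      rw [hsplit]
      have h3 : |c₀ * (m * (x0 * q - ξ) / (x0 ^ 2 + ξ ^ 2))| ≤ QM * B1 := by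
        rw [abs_mul]
        exact mul_le_mul hc₀QM (habsB ξ hMξ) (abs_nonneg _) hQM0
      calc |c₀ * (rv / (1 + q ^ 2)) + c₀ * (m * (x0 * q - ξ) / (x0 ^ 2 + ξ ^ 2))|
          ≤ |c₀ * (rv / (1 + q ^ 2))| + |c₀ * (m * (x0 * q - ξ) / (x0 ^ 2 + ξ ^ 2))| :=
            abs_add_le _ _
        _ ≤ M + 2 * QM * B1 := by linarith only [hA, h3]
    have hφDb : |φD ξ| ≤ C := by
      rw [hφDdef]
      simp only
      have ht1 : c₀ * dS ξ * Brf ξ = dS ξ * (c₀ * Brf ξ) := by ring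
      have ht2 : c₀ * Sf ξ * dBr ξ = c₀ * Sf ξ * dBr ξ := rfl
      have hterm1 : |c₀ * dS ξ * Brf ξ| ≤ 2 * m * sδ⁻¹ ^ 3 * (M + 2 * QM * B1) := by
        rw [ht1, abs_mul]
        exact mul_le_mul hdSξ hcBrξ (abs_nonneg _) (by positivity)
      have hterm2 : |c₀ * Sf ξ * dBr ξ| ≤ QM * sδ⁻¹ ^ 2 * B2 := by
        rw [abs_mul, abs_mul]
        apply mul_le_mul ?_ hdBrξ (abs_nonneg _) (by positivity)
        exact mul_le_mul hc₀QM hSξ (abs_nonneg _) hQM0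
      calc |c₀ * dS ξ * Brf ξ + c₀ * Sf ξ * dBr ξ|
          ≤ |c₀ * dS ξ * Brf ξ| + |c₀ * Sf ξ * dBr ξ| := abs_add_le _ _
        _ ≤ C := by rw [hCdef]; linarith only [hterm1, hterm2]
    -- final contradiction
    have hguφ : g x0 (t0 + s) - φ u = c₀ * Sf u * ((ru - rv) / (1 + q ^ 2)) := by
      rw [hflowu, hφdef]
      simp only [hBrfdef]
      ring
    have hguφ' : 0 ≤ g x0 (t0 + s) - φ u := by
      rw [hguφ]
      apply mul_nonneg (mul_nonneg hc₀pos.le ?_)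
      · apply div_nonneg ?_ (by positivity)
        rw [hrudef, hrvdef]
        exact hxx2
      · rw [hSfdef]
        positivity
    have h1 : -C * (v - u) ≤ φ u - φ v := by
      have habs2 := (abs_le.1 hφDb).2
      have hmul := mul_le_mul_of_nonneg_right habs2 (by linarith only [huv'] : (0:ℝ) ≤ v - u)
      linarith only [hφuv, hmul]
    have hfinal : C * (u - v) ≤ g x0 (t0 + s) - g x0 t0 := by
      have h2 : g x0 t0 = φ v := hflowv
      have h3 : C * (u - v) = -C * (v - u) := by ring
      linarith only [hguφ', h1, h2, h3]
    have hKC : K * (u - v) < C * (u - v) := by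
      have h4 : K * (u - v) = C * (u - v) + (u - v) := by rw [hKdef]; ring
      linarith only [h4, huv]
    linarith only [hgt, hfinal, hKC]
  -- Step E : conclude nonnegativity at (x, t)
  by_contra hneg
  push_neg at hneg
  have hE : (0:ℝ) < Real.exp (K * T) := Real.exp_pos _
  set ε : ℝ := -g x t / (4 * Real.exp (K * T)) with hεdef
  have hεpos : 0 < ε := by
    rw [hεdef]
    apply div_pos (by linarith only [hneg]) (by positivity)
  obtain ⟨s1, hs1pos, hs11, hclaim⟩ := claimD ε hεpos
  have hder := hdt x hxI t ht0
  have hslopetends : Filter.Tendsto (slope (fun τ => ψ x τ) t)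
      (nhdsWithin t (Set.Ioi t)) (nhds (g x t)) := by
    have h := hder.hasDerivWithinAt (s := Set.Ioi t)
    have h2 := hasDerivWithinAt_iff_tendsto_slope.1 h
    have h3 : Set.Ioi t \ {t} = Set.Ioi t := by
      ext y
      simp only [Set.mem_diff, Set.mem_Ioi, Set.mem_singleton_iff]
      constructor
      · exact fun hy => hy.1
      · exact fun hy => ⟨hy, ne_of_gt hy⟩
    rwa [h3] at h2
  have hbound : ∀ᶠ t' in nhdsWithin t (Set.Ioi t),
      -(2 * ε * Real.exp (K * T)) ≤ slope (fun τ => ψ x τ) t t' := by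
    filter_upwards [Ioo_mem_nhdsGT_of_mem
      (⟨le_refl t, by linarith only [hs1pos]⟩ : t ∈ Set.Ico t (t + s1))] with t' ht'
    have hs' : 0 < t' - t := by linarith only [ht'.1]
    have hcl := hclaim (t' - t) hs' (by linarith only [ht'.2]) x hx t
      ⟨le_of_lt ht0, by rw [hTdef]⟩
    rw [show t + (t' - t) = t' by ring] at hcl
    rw [slope_def_field]
    have hTt : T = t := hTdef
    have h5 : Real.exp (-(K * t)) * (ψ x t' - ψ x t) > -(2 * ε * (t' - t)) := by
      linarith only [hcl]
    have h6 := (mul_lt_mul_iff_right₀ (Real.exp_pos (K * t))).2 h5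
    rw [← mul_assoc, ← Real.exp_add] at h6
    simp only [add_neg_cancel, Real.exp_zero, one_mul] at h6
    rw [le_div_iff₀ hs']
    rw [hTt]
    nlinarith only [h6]
  have hge : -(2 * ε * Real.exp (K * T)) ≤ g x t := ge_of_tendsto hslopetends hbound
  have hcomp : -(2 * ε * Real.exp (K * T)) = g x t / 2 := by
    rw [hεdef]
    field_simp
    ring
  rw [hcomp] at hge
  linarith only [hge, hneg]
end

section
/- Let ξ be the unique root in (3,6) of the polynomial F(s) = −s⁴ + 2887s² − 10692s − 2890, and set c := (ξ² − 1)/(2ξ), A := −(ξ² + 1)²/(2ξ), μ := 3(972 − ξ²)/26, λ := 3ξ² − μ. Let ψ̃ : [1,3] → ℝ be continuous, differentiable on (1,3), with ψ̃(1) = ξ, ψ̃(3) = 18, satisfying ψ̃(x)³ − 3x²·ψ̃(x) − c·(3x·ψ̃(x)² − x³) = A for all x ∈ [1,3], and such that ψ̃'(x) → +∞ as x → 1⁺. Then ψ^{(ξ)}(x) := √((μx² + λ/x)/3) satisfies ψ^{(ξ)}(x) ≤ ψ̃(x) for all x ∈ [1,3]. Consequently, with μ₀ := 2889/26 and λ₀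 := 27 − μ₀, the initial function ψ₀(x) := √((μ₀x² + λ₀/x)/3) also satisfies ψ₀(x) ≤ ψ̃(x) for all x ∈ [1,3]. -/
/-!
Both `ψ̃` and the comparison function `φ = ψ^{(ξ)}` equal `ξ` at `x = 1` and `18` at `x = 3`.
If they met at some `x ∈ (1,3)`, then `t = ψ̃(x)` would satisfy both the cubic and
`26 x t² = 972 (x³ - 1) + ξ² (27 - x³)`. Eliminating `t` gives a polynomial relation between
`x` and `ξ` which, modulo `F(ξ) = 0`, is `(x - 1)(x - 3)` times a polynomial that is positive for
`x ≥ 1` and `ξ` in a bracket of width `10⁻⁷` around the root. So `ψ̃ - φ` has no zero in `(1,3)`.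
Since `ψ̃' → +∞` at `1` while `φ` is differentiable there, `ψ̃ > φ` just to the right of `1`,
hence on all of `(1,3)`. Finally `ψ₀ = ψ^{(3)}`, and the radicand of `ψ^{(s)}` is increasing in `s²`
as long as `x ≤ 3`.
-/

open Set Filter Topology

lemma IsPreconnected.forall_lt_of_ne {X : Type*} [TopologicalSpace X] {s : Set X} {f g : X → ℝ}
    (hs : IsPreconnected s) (hf : ContinuousOn f s) (hg : ContinuousOn g s)
    (hne : ∀ x ∈ s, f x ≠ g x) {x₀ : X} (hx₀ : x₀ ∈ s) (h₀ : f x₀ < g x₀) : ∀ x ∈ s, f x < g x := by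
  intro x hx
  by_contra! h
  obtain ⟨y, hy, hfy⟩ := hs.intermediate_value₂ hx₀ hx hf hg h₀.le h
  exact hne y hy hfy

lemma tendsto_slope_atTop_of_tendsto_deriv_atTop {f f' : ℝ → ℝ} {a b : ℝ} (hab : a < b)
    (hf : ContinuousOn f (Icc a b)) (hderiv : ∀ x ∈ Ioo a b, HasDerivAt f (f' x) x)
    (h : Tendsto f' (𝓝[>] a) atTop) : Tendsto (slope f a) (𝓝[>] a) atTop := by
  refine tendsto_atTop.2 fun M => ?_
  obtain ⟨w, hw, hsub⟩ := mem_nhdsGT_iff_exists_Ioo_subset.1 (h.eventually (eventually_ge_atTop M))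
  filter_upwards [Ioo_mem_nhdsGT (lt_min hw hab)] with x ⟨hax, hxwb⟩
  obtain ⟨hxw, hxb⟩ := lt_min_iff.1 hxwb
  obtain ⟨y, hy, hfy⟩ := exists_hasDerivAt_eq_slope f f' hax
    (hf.mono (Icc_subset_Icc le_rfl hxb.le)) (fun y hy => hderiv y ⟨hy.1, hy.2.trans hxb⟩)
  rw [slope_def_field, ← hfy]
  exact hsub ⟨hy.1, hy.2.trans hxw⟩

lemma eventually_lt_of_tendsto_slope_atTop {f g : ℝ → ℝ} {a d : ℝ}
    (hg : HasDerivWithinAt g d (Ioi a) a) (hf : Tendsto (slope f a) (𝓝[>] a) atTop)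
    (ha : g a ≤ f a) : ∀ᶠ x in 𝓝[>] a, g x < f x := by
  have hg' := (hasDerivWithinAt_iff_tendsto_slope' (lt_irrefl a)).1 hg
  filter_upwards [hg'.eventually_lt_const (lt_add_one d), hf.eventually_gt_atTop (d + 1),
    self_mem_nhdsWithin] with x hgx hfx hx
  have hxa : 0 < x - a := sub_pos.2 hx
  rw [slope_def_field, div_lt_iff₀ hxa] at hgx
  rw [slope_def_field, lt_div_iff₀ hxa] at hfx
  linarith

lemma cubic_eliminate {c A x t u : ℝ} (h : t ^ 3 - 3 * x ^ 2 * t - c * (3 * x * t ^ 2 - x ^ 3) = A)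
    (hu : 3 * x * t ^ 2 = u) : u * (u - 9 * x ^ 3) ^ 2 = 27 * x ^ 3 * (c * (u - x ^ 3) + A) ^ 2 := by
  have hlin : t * (u - 9 * x ^ 3) = 3 * x * (c * (u - x ^ 3) + A) := by
    rw [← hu]; linear_combination 3 * x * h
  linear_combination (3 * x * (t * (u - 9 * x ^ 3) + 3 * x * (c * (u - x ^ 3) + A))) * hlin
    - (u - 9 * x ^ 3) ^ 2 * hu

def calabiQuartic (s : ℝ) : ℝ := -s ^ 4 + 2887 * s ^ 2 - 10692 * s - 2890

lemma calabiQuartic_strictMonoOn : StrictMonoOn calabiQuartic (Icc 3 6) := by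
  rintro a ⟨ha3, ha6⟩ b ⟨hb3, hb6⟩ hab
  have hfactor : calabiQuartic b - calabiQuartic a
      = (b - a) * (2887 * (a + b) - 10692 - (a ^ 3 + a ^ 2 * b + a * b ^ 2 + b ^ 3)) := by
    unfold calabiQuartic; ring
  have hcubic : a ^ 3 + a ^ 2 * b + a * b ^ 2 + b ^ 3 ≤ 4 * 6 ^ 3 := by
    nlinarith [mul_le_mul ha6 hb6 (by linarith) (by norm_num)]
  nlinarith

lemma mem_Ioo_of_calabiQuartic_eq_zero {s : ℝ} (hs : s ∈ Ioo 3 6) (hF : calabiQuartic s = 0) :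
    s ∈ Ioo (39769939 / 10 ^ 7) (39769940 / 10 ^ 7) := by
  refine ⟨(calabiQuartic_strictMonoOn.lt_iff_lt ⟨by norm_num, by norm_num⟩
      (Ioo_subset_Icc_self hs)).1 ?_,
    (calabiQuartic_strictMonoOn.lt_iff_lt (Ioo_subset_Icc_self hs) ⟨by norm_num, by norm_num⟩).1 ?_⟩ <;>
  rw [hF] <;> norm_num [calabiQuartic]

/-- Modulo `calabiQuartic s`, the eliminant
`4 s² u (u - 9x³)² - 27 x³ ((s² - 1)(u - x³) - (s² + 1)²)²` with `26 u = 3 (972 (x³ - 1) + s² (27 - x³))`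
equals `2916 / 26³ · (x - 1)(x - 3) · separant x s`; these are the coefficients of `separant x s`
in powers of `x - 1`. -/
def separantCoeff (s : ℝ) : Fin 8 → ℝ :=
  ![-23503772012760 - 86925651637968 * s + 23582855576280 * s ^ 2 - 60270951312 * s ^ 3,
    -29800076879430 - 110215293043284 * s + 29887256065095 * s ^ 2 - 72889965720 * s ^ 3,
    -12140036921130 - 44906875853004 * s + 12149670897925 * s ^ 2 - 22721083704 * s ^ 3,
    2072906502540 + 7657393258152 * s - 2112773234110 * s ^ 2 + 14177441520 * s ^ 3,
    3407226984750 + 12595962454020 * s - 3437822395535 * s ^ 2 + 13891536648 * s ^ 3,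
    1360078904820 + 5028303323736 * s - 1371144081890 * s ^ 2 + 5235923088 * s ^ 3,
    257945999190 + 953643733812 * s - 260044567255 * s ^ 2 + 993019896 * s ^ 3,
    23449636290 + 86694884892 * s - 23640415205 * s ^ 2 + 90274536 * s ^ 3]

def separant (x s : ℝ) : ℝ := ∑ k : Fin 8, separantCoeff s k * (x - 1) ^ (k : ℕ)

lemma separantCoeff_pos {s : ℝ} (hs : s ∈ Ioo (39769939 / 10 ^ 7) (39769940 / 10 ^ 7)) (k : Fin 8) :
    0 < separantCoeff s k := by
  obtain ⟨hl, hu⟩ := hs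
  have hs0 : (0 : ℝ) < s := lt_trans (by norm_num) hl
  have hl2 := pow_lt_pow_left₀ hl (by norm_num) two_ne_zero
  have hu2 := pow_lt_pow_left₀ hu hs0.le two_ne_zero
  have hl3 := pow_lt_pow_left₀ hl (by norm_num) three_ne_zero
  have hu3 := pow_lt_pow_left₀ hu hs0.le three_ne_zero
  fin_cases k <;> simp [separantCoeff] <;> linarith

lemma separant_pos {x s : ℝ} (hx : 1 ≤ x) (hs : s ∈ Ioo (39769939 / 10 ^ 7) (39769940 / 10 ^ 7)) :
    0 < separant x s :=
  Finset.sum_pos' (fun k _ => mul_nonneg (separantCoeff_pos hs k).le (pow_nonneg (by linarith) _))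
    ⟨0, Finset.mem_univ _, by simpa using separantCoeff_pos hs 0⟩

lemma no_crossing {s c A x t : ℝ} (hs : s ∈ Ioo (39769939 / 10 ^ 7) (39769940 / 10 ^ 7))
    (hF : calabiQuartic s = 0) (hc : 2 * s * c = s ^ 2 - 1) (hA : 2 * s * A = -(s ^ 2 + 1) ^ 2)
    (hx : x ∈ Ioo 1 3) (hcubic : t ^ 3 - 3 * x ^ 2 * t - c * (3 * x * t ^ 2 - x ^ 3) = A)
    (ht : 26 * x * t ^ 2 = 972 * (x ^ 3 - 1) + s ^ 2 * (27 - x ^ 3)) : False := by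
  set u := 3 * (972 * (x ^ 3 - 1) + s ^ 2 * (27 - x ^ 3)) / 26 with hu
  have helim := cubic_eliminate hcubic (u := u) (by rw [hu]; linear_combination 3 / 26 * ht)
  have hcleared : 4 * s ^ 2 * u * (u - 9 * x ^ 3) ^ 2
      = 27 * x ^ 3 * ((s ^ 2 - 1) * (u - x ^ 3) - (s ^ 2 + 1) ^ 2) ^ 2 := by
    linear_combination 4 * s ^ 2 * helim + 27 * x ^ 3 * ((u - x ^ 3) * hc + hA) *
      (2 * s * c * (u - x ^ 3) + 2 * s * A + (s ^ 2 - 1) * (u - x ^ 3) - (s ^ 2 + 1) ^ 2)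
  rw [hu] at hcleared
  unfold calabiQuartic at hF
  have hzero : (x - 1) * (x - 3) * separant x s = 0 := by
    simp only [separant, separantCoeff, Fin.sum_univ_succ, Fin.sum_univ_zero, Matrix.cons_val_succ,
      Matrix.cons_val_zero, Fin.val_succ, Fin.val_zero]
    linear_combination (26 ^ 3 / 2916) * hcleared - (1 / 54) *
      ((-315871642386 + 420901272 * s - 109398114 * s ^ 2 - 39366 * s ^ 4)
        + (339400930612 - 467229708 * s + 117459935 * s ^ 2 + 43699 * s ^ 4) * x ^ 3
        + (-23967485090 + 47600784 * s - 8174200 * s ^ 2 - 4452 * s ^ 4) * x ^ 6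
        + (438196864 - 1272348 * s + 112379 * s ^ 2 + 119 * s ^ 4) * x ^ 9) * hF
  have hneg : (x - 1) * (x - 3) * separant x s < 0 :=
    mul_neg_of_neg_of_pos (mul_neg_of_pos_of_neg (sub_pos.2 hx.1) (sub_neg.2 hx.2))
      (separant_pos hx.1.le hs)
  exact hneg.ne hzero

noncomputable def comparisonMu (s : ℝ) : ℝ := 3 * (972 - s ^ 2) / 26

noncomputable def comparisonLambda (s : ℝ) : ℝ := 3 * s ^ 2 - comparisonMu s

noncomputable def comparisonFn (s x : ℝ) : ℝ := √((comparisonMu s * x ^ 2 + comparisonLambda s / x) / 3)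

lemma comparison_radicand_eq (s : ℝ) {x : ℝ} (hx : x ≠ 0) :
    (comparisonMu s * x ^ 2 + comparisonLambda s / x) / 3
      = (972 * (x ^ 3 - 1) + s ^ 2 * (27 - x ^ 3)) / (26 * x) := by
  unfold comparisonLambda comparisonMu
  field_simp
  ring

lemma comparison_radicand_nonneg (s : ℝ) {x : ℝ} (hx : x ∈ Icc 1 3) :
    0 ≤ (comparisonMu s * x ^ 2 + comparisonLambda s / x) / 3 := by
  have hx3 : 1 ≤ x ^ 3 ∧ x ^ 3 ≤ 27 :=
    ⟨one_le_pow₀ hx.1, (pow_le_pow_left₀ (by linarith [hx.1]) hx.2 3).trans_eq (by norm_num)⟩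
  rw [comparison_radicand_eq s (by linarith [hx.1] : x ≠ 0)]
  apply div_nonneg _ (by linarith [hx.1])
  nlinarith [sq_nonneg s]

lemma comparisonFn_one {s : ℝ} (hs : 0 ≤ s) : comparisonFn s 1 = s := by
  rw [comparisonFn, comparison_radicand_eq s one_ne_zero]
  norm_num [Real.sqrt_sq hs]

lemma comparisonFn_three (s : ℝ) : comparisonFn s 3 = 18 := by
  rw [comparisonFn, comparison_radicand_eq s three_ne_zero]
  norm_num [show (324 : ℝ) = 18 ^ 2 by norm_num]

lemma mul_comparisonFn_sq (s : ℝ) {x : ℝ} (hx : x ∈ Icc 1 3) :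
    26 * x * comparisonFn s x ^ 2 = 972 * (x ^ 3 - 1) + s ^ 2 * (27 - x ^ 3) := by
  have hx0 : x ≠ 0 := by linarith [hx.1]
  rw [comparisonFn, Real.sq_sqrt (comparison_radicand_nonneg s hx), comparison_radicand_eq s hx0]
  field_simp

lemma comparisonFn_le_of_sq_le {s s' x : ℝ} (hss' : s ^ 2 ≤ s' ^ 2) (hx0 : 0 < x) (hx3 : x ≤ 3) :
    comparisonFn s x ≤ comparisonFn s' x := by
  apply Real.sqrt_le_sqrt
  rw [comparison_radicand_eq s hx0.ne', comparison_radicand_eq s' hx0.ne']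
  have : x ^ 3 ≤ 27 := (pow_le_pow_left₀ hx0.le hx3 3).trans_eq (by norm_num)
  gcongr ?_ / _
  nlinarith

lemma continuousOn_comparisonFn (s : ℝ) : ContinuousOn (comparisonFn s) {0}ᶜ := by
  unfold comparisonFn
  fun_prop (disch := simp_all)

lemma differentiableAt_comparisonFn_one {s : ℝ} (hs : s ≠ 0) :
    DifferentiableAt ℝ (comparisonFn s) 1 := by
  have hrad : (comparisonMu s * 1 ^ 2 + comparisonLambda s / 1) / 3 ≠ 0 := by
    rw [comparison_radicand_eq s one_ne_zero]; norm_num [hs]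
  unfold comparisonFn
  exact DifferentiableAt.sqrt (by fun_prop (disch := norm_num)) hrad

theorem stmt9_general (ξ : ℝ) (hmem : ξ ∈ Set.Ioo (3:ℝ) 6)
    (hroot : -ξ ^ 4 + 2887 * ξ ^ 2 - 10692 * ξ - 2890 = 0)
    (c A μ lam : ℝ)
    (hc : c = (ξ ^ 2 - 1) / (2 * ξ))
    (hA : A = -(ξ ^ 2 + 1) ^ 2 / (2 * ξ))
    (hμ : μ = 3 * (972 - ξ ^ 2) / 26)
    (hlam : lam = 3 * ξ ^ 2 - μ)
    (ψ ψ' : ℝ → ℝ)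
    (hcont : ContinuousOn ψ (Set.Icc 1 3))
    (hderiv : ∀ x ∈ Set.Ioo (1:ℝ) 3, HasDerivAt ψ (ψ' x) x)
    (h1 : ψ 1 = ξ) (h3 : ψ 3 = 18)
    (heq : ∀ x ∈ Set.Icc (1:ℝ) 3,
      (ψ x) ^ 3 - 3 * x ^ 2 * ψ x - c * (3 * x * (ψ x) ^ 2 - x ^ 3) = A)
    (htend : Filter.Tendsto ψ' (nhdsWithin 1 (Set.Ioi 1)) Filter.atTop) :
    (∀ x ∈ Set.Icc (1:ℝ) 3, Real.sqrt ((μ * x ^ 2 + lam / x) / 3) ≤ ψ x) ∧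
    (∀ x ∈ Set.Icc (1:ℝ) 3,
      Real.sqrt (((2889 / 26) * x ^ 2 + (27 - 2889 / 26) / x) / 3) ≤ ψ x) := by
  have hξ := mem_Ioo_of_calabiQuartic_eq_zero hmem hroot
  have hξ0 : 0 < ξ := by linarith [hmem.1]
  have h13 : (1 : ℝ) < 3 := by norm_num
  have hφ1 : comparisonFn ξ 1 = ψ 1 := (comparisonFn_one hξ0.le).trans h1.symm
  have hφcont : ContinuousOn (comparisonFn ξ) (Icc 1 3) :=
    (continuousOn_comparisonFn ξ).mono fun x hx => by simp; linarith [hx.1]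
  have hne : ∀ x ∈ Ioo (1 : ℝ) 3, comparisonFn ξ x ≠ ψ x := fun x hx hφψ =>
    no_crossing hξ hroot (by rw [hc]; field_simp) (by rw [hA]; field_simp) hx
      (heq x (Ioo_subset_Icc_self hx)) (hφψ ▸ mul_comparisonFn_sq ξ (Ioo_subset_Icc_self hx))
  obtain ⟨x₀, hφψ₀, hx₀⟩ := ((eventually_lt_of_tendsto_slope_atTop
    (differentiableAt_comparisonFn_one hξ0.ne').hasDerivAt.hasDerivWithinAt
    (tendsto_slope_atTop_of_tendsto_deriv_atTop h13 hcont hderiv htend) hφ1.le).and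
    (Ioo_mem_nhdsGT h13)).exists
  have hlt := isPreconnected_Ioo.forall_lt_of_ne (hφcont.mono Ioo_subset_Icc_self)
    (hcont.mono Ioo_subset_Icc_self) hne hx₀ hφψ₀
  have hle : ∀ x ∈ Icc (1 : ℝ) 3, comparisonFn ξ x ≤ ψ x := by
    intro x hx
    rcases eq_endpoints_or_mem_Ioo_of_mem_Icc hx with rfl | rfl | hx
    · exact hφ1.le
    · rw [comparisonFn_three, h3]
    · exact (hlt x hx).le
  subst hμ hlam
  refine ⟨hle, fun x hx => ?_⟩
  have hψ₀ : comparisonFn 3 x = √(((2889 / 26) * x ^ 2 + (27 - 2889 / 26) / x) / 3) := by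
    norm_num [comparisonFn, comparisonMu, comparisonLambda]
  rw [← hψ₀]
  exact (comparisonFn_le_of_sq_le (by nlinarith [hmem.1]) (by linarith [hx.1]) hx.2).trans (hle x hx)

/-- For the blow-up of `CP³` with `p = 18`, `q = b = 3`: the explicit comparison
function `ψ^{(ξ)}(x) = √((μx² + λ/x)/3)` lies below the singular branch `ψ̃ = ψ̃_ξ`
of the cubic level set, and consequently so does the initial Calabi potential
`ψ₀(x) = √((μ₀x² + λ₀/x)/3)` with `μ₀ = 2889/26`, `λ₀ = 27 − μ₀`. -/
theorem stmt9 (ξ : ℝ) (hmem : ξ ∈ Set.Ioo (3:ℝ) 6)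
    (hroot : -ξ ^ 4 + 2887 * ξ ^ 2 - 10692 * ξ - 2890 = 0)
    (huniq : ∀ s ∈ Set.Ioo (3:ℝ) 6, -s ^ 4 + 2887 * s ^ 2 - 10692 * s - 2890 = 0 → s = ξ)
    (c A μ lam : ℝ)
    (hc : c = (ξ ^ 2 - 1) / (2 * ξ))
    (hA : A = -(ξ ^ 2 + 1) ^ 2 / (2 * ξ))
    (hμ : μ = 3 * (972 - ξ ^ 2) / 26)
    (hlam : lam = 3 * ξ ^ 2 - μ)
    (ψ ψ' : ℝ → ℝ)
    (hcont : ContinuousOn ψ (Set.Icc 1 3))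
    (hderiv : ∀ x ∈ Set.Ioo (1:ℝ) 3, HasDerivAt ψ (ψ' x) x)
    (h1 : ψ 1 = ξ) (h3 : ψ 3 = 18)
    (heq : ∀ x ∈ Set.Icc (1:ℝ) 3,
      (ψ x) ^ 3 - 3 * x ^ 2 * ψ x - c * (3 * x * (ψ x) ^ 2 - x ^ 3) = A)
    (htend : Filter.Tendsto ψ' (nhdsWithin 1 (Set.Ioi 1)) Filter.atTop) :
    (∀ x ∈ Set.Icc (1:ℝ) 3, Real.sqrt ((μ * x ^ 2 + lam / x) / 3) ≤ ψ x) ∧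
    (∀ x ∈ Set.Icc (1:ℝ) 3,
      Real.sqrt (((2889 / 26) * x ^ 2 + (27 - 2889 / 26) / x) / 3) ≤ ψ x) :=
  stmt9_general ξ hmem hroot c A μ lam hc hA hμ hlam ψ ψ' hcont hderiv h1 h3 heq htend
end

section
/- The polynomial F(s) = −s⁴ + 2887s² − 10692s − 2890 has exactly one root ξ in the open interval (3,6). Moreover this root satisfies 2890 − 3ξ² > 0, (5346 − ξ³ + 3ξ)/(2890 − 3ξ²) = (ξ² − 1)/(2ξ), and (ξ² − 1)/(2ξ) > 5328/2863. Furthermore, with c := 5328/2863 one has c < 3 < c + √(c² + 1). -/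
/-!
`quartic` is strictly increasing on `[3, 6]`: `quartic y - quartic x` factors as `y - x` times a
cofactor that is positive there. Since `quartic 3 < 0 < quartic 6`, it has exactly one root `ξ` in
`(3, 6)`, and `quartic (1987/500) < 0` puts `ξ` above `1987/500`, a point where `zeta` already
exceeds `5328/2863`; as `zeta` is increasing, so does `zeta ξ`. Clearing denominators, the two
expressions for the slope agree exactly when `quartic ξ = 0`. Finally `zeta x < c` is equivalent
to `x < c + √(c² + 1)`, the larger root of `x² - 2cx - 1`.
-/

open Set

namespace DHYMBlowup

def quartic (s : ℝ) : ℝ := -s ^ 4 + 2887 * s ^ 2 - 10692 * s - 2890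

/-- If `ξ = cot θ` then `zeta ξ = cot 2θ`. -/
noncomputable def zeta (x : ℝ) : ℝ := (x ^ 2 - 1) / (2 * x)

theorem quartic_sub_quartic (x y : ℝ) :
    quartic y - quartic x =
      (y - x) * (2887 * (x + y) - 10692 - (x ^ 3 + x ^ 2 * y + x * y ^ 2 + y ^ 3)) := by
  unfold quartic; ring

theorem strictMonoOn_quartic : StrictMonoOn quartic (Icc 3 6) := by
  rintro x ⟨hx3, hx6⟩ y ⟨hy3, hy6⟩ hxy
  have hcof : 0 < 2887 * (x + y) - 10692 - (x ^ 3 + x ^ 2 * y + x * y ^ 2 + y ^ 3) := by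
    have hxx : x * x ≤ 36 := by nlinarith
    have hyy : y * y ≤ 36 := by nlinarith
    have hxy' : x * y ≤ 36 := by nlinarith
    nlinarith
  have := quartic_sub_quartic x y
  nlinarith [mul_pos (sub_pos.mpr hxy) hcof]

theorem existsUnique_quartic_eq_zero : ∃! ξ, ξ ∈ Ioo (3 : ℝ) 6 ∧ quartic ξ = 0 := by
  have hcont : ContinuousOn quartic (Icc 3 6) := by unfold quartic; fun_prop
  obtain ⟨ξ, hξ, hroot⟩ :=
    intermediate_value_Ioo (by norm_num) hcont (by norm_num [quartic] : (0 : ℝ) ∈ Ioo _ _)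
  refine ⟨ξ, ⟨hξ, hroot⟩, fun y ⟨hy, hy0⟩ => ?_⟩
  exact strictMonoOn_quartic.injOn (Ioo_subset_Icc_self hy) (Ioo_subset_Icc_self hξ)
    (hy0.trans hroot.symm)

theorem lt_of_quartic_eq_zero {ξ : ℝ} (hξ : ξ ∈ Ioo (3 : ℝ) 6) (h : quartic ξ = 0) :
    1987 / 500 < ξ :=
  strictMonoOn_quartic.lt_iff_lt (by norm_num) (Ioo_subset_Icc_self hξ) |>.mp
    (by rw [h]; norm_num [quartic])

theorem div_eq_zeta_iff {ξ : ℝ} (hξ : ξ ≠ 0) (hd : 2890 - 3 * ξ ^ 2 ≠ 0) :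
    (5346 - ξ ^ 3 + 3 * ξ) / (2890 - 3 * ξ ^ 2) = zeta ξ ↔ quartic ξ = 0 := by
  rw [zeta, div_eq_div_iff hd (mul_ne_zero two_ne_zero hξ), quartic]
  constructor <;> intro h <;> linarith

theorem strictMonoOn_zeta : StrictMonoOn zeta (Ioi 0) := by
  intro x (hx : 0 < x) y (hy : 0 < y) hxy
  rw [zeta, zeta, div_lt_div_iff₀ (by positivity) (by positivity)]
  nlinarith [mul_pos hx hy, mul_pos (mul_pos hx hy) (sub_pos.mpr hxy)]

theorem lt_add_sqrt_of_zeta_lt {x c : ℝ} (hx : 0 < x) (h : zeta x < c) :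
    x < c + √(c ^ 2 + 1) := by
  rcases le_or_gt x c with hxc | hcx
  · linarith [Real.sqrt_pos.mpr (by positivity : 0 < c ^ 2 + 1)]
  · rw [zeta, div_lt_iff₀ (by positivity)] at h
    have : x - c < √(c ^ 2 + 1) := (Real.lt_sqrt (by linarith)).mpr (by nlinarith)
    linarith

end DHYMBlowup

open DHYMBlowup in
/-- Numerical facts for the blow-up of `CP³` with classes `α = 18[H] − 3[E]`,
`β = 3[H] − [E]`: the quartic `F(s) = −s⁴ + 2887s² − 10692s − 2890` has exactly one
root `ξ` in `(3,6)`; this root satisfies `2890 − 3ξ² > 0` and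
`(5346 − ξ³ + 3ξ)/(2890 − 3ξ²) = (ξ² − 1)/(2ξ) > 5328/2863`; and with
`c = 5328/2863` one has `c < 3 < c + √(c² + 1)`. -/
theorem stmt10 :
    (∃! ξ : ℝ, ξ ∈ Set.Ioo (3:ℝ) 6 ∧ -ξ ^ 4 + 2887 * ξ ^ 2 - 10692 * ξ - 2890 = 0) ∧
    (∀ ξ ∈ Set.Ioo (3:ℝ) 6, -ξ ^ 4 + 2887 * ξ ^ 2 - 10692 * ξ - 2890 = 0 →
      0 < 2890 - 3 * ξ ^ 2 ∧
      (5346 - ξ ^ 3 + 3 * ξ) / (2890 - 3 * ξ ^ 2) = (ξ ^ 2 - 1) / (2 * ξ) ∧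
      (5328 / 2863 : ℝ) < (ξ ^ 2 - 1) / (2 * ξ)) ∧
    ((5328 / 2863 : ℝ) < 3 ∧
      (3 : ℝ) < 5328 / 2863 + Real.sqrt ((5328 / 2863) ^ 2 + 1)) := by
  refine ⟨existsUnique_quartic_eq_zero, fun ξ hξ hroot => ?_, by norm_num, ?_⟩
  · have hden : 0 < 2890 - 3 * ξ ^ 2 := by nlinarith [hξ.1, hξ.2]
    have hξ0 : 0 < ξ := by linarith [hξ.1]
    have hslope : zeta (1987 / 500) < zeta ξ :=
      strictMonoOn_zeta (by norm_num : (0 : ℝ) < 1987 / 500) hξ0 (lt_of_quartic_eq_zero hξ hroot)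
    refine ⟨hden, (div_eq_zeta_iff hξ0.ne' hden.ne').mpr hroot, ?_⟩
    exact lt_trans (by norm_num [zeta]) hslope
  · exact lt_add_sqrt_of_zeta_lt three_pos (by norm_num [zeta])
end

section
/- Let ξ > 0 and set c := (ξ² − 1)/(2ξ) and A := −(ξ² + 1)²/(2ξ). For a real number x, set R₁ := −3(c² + 1)x² and R₂ := −2c(c² + 1)x³ − A. Then −(4R₁³ + 27R₂²) = 108(c² + 1)²·(x⁶ + (ξ² − 1)x³ − ξ²) = 108(c² + 1)²·(x³ − 1)(x³ + ξ²). In particular, −(4R₁³ + 27R₂²) > 0 for every x > 1 and −(4R₁³ + 27R₂²) = 0 at x = 1. -/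
/-! With `c = (ξ² - 1)/(2ξ)` one has `2ξc = ξ² - 1` and `c² + 1 = ((ξ² + 1)/(2ξ))²`, so
`A = -2ξ(c² + 1)`. Hence `R₁ = -3(c² + 1)x²` and `R₂ = -2(c² + 1)(cx³ - ξ)` share the factor
`c² + 1`, and `-(4R₁³ + 27R₂²) = 108(c² + 1)²((c² + 1)x⁶ - (cx³ - ξ)²)`, whose last factor is
`x⁶ + 2cξx³ - ξ² = (x³ - 1)(x³ + ξ²)`. -/

theorem neg_sq_add_one_sq_div_eq {K : Type*} [Field K] {ξ c : K} (hξ : ξ ≠ 0)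
    (hc : 2 * ξ * c = ξ ^ 2 - 1) :
    -(ξ ^ 2 + 1) ^ 2 / (2 * ξ) = -2 * ξ * (c ^ 2 + 1) := by
  rcases eq_or_ne (2 : K) 0 with h2 | h2
  · simp [h2]
  have h2ξ : 2 * ξ ≠ 0 := mul_ne_zero h2 hξ
  rw [div_eq_iff h2ξ]
  linear_combination (2 * ξ * c + ξ ^ 2 - 1) * hc

theorem neg_disc_eq {R : Type*} [CommRing R] {ξ c A : R} (x : R)
    (hc : 2 * ξ * c = ξ ^ 2 - 1) (hA : A = -2 * ξ * (c ^ 2 + 1)) :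
    -(4 * (-3 * (c ^ 2 + 1) * x ^ 2) ^ 3 + 27 * (-2 * c * (c ^ 2 + 1) * x ^ 3 - A) ^ 2) =
      108 * (c ^ 2 + 1) ^ 2 * (x ^ 6 + (ξ ^ 2 - 1) * x ^ 3 - ξ ^ 2) := by
  subst hA
  linear_combination 108 * (c ^ 2 + 1) ^ 2 * x ^ 3 * hc

theorem pow_three_sub_one_mul_pos {R : Type*} [CommRing R] [LinearOrder R]
    [IsStrictOrderedRing R] {x : R} (ξ : R) (hx : 1 < x) :
    0 < (x ^ 3 - 1) * (x ^ 3 + ξ ^ 2) := by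
  have hx3 : 1 < x ^ 3 := one_lt_pow₀ hx (by norm_num)
  exact mul_pos (sub_pos.mpr hx3) (by positivity)

/-- Discriminant of the depressed cubic `Ψ³ + R₁Ψ + R₂ = 0` arising from the level-set
equation on the blow-up of `CP³`: with `c = (ξ²−1)/(2ξ)`, `A = −(ξ²+1)²/(2ξ)`,
`R₁ = −3(c²+1)x²`, `R₂ = −2c(c²+1)x³ − A`, one has
`−(4R₁³ + 27R₂²) = 108(c²+1)²(x⁶ + (ξ²−1)x³ − ξ²) = 108(c²+1)²(x³−1)(x³+ξ²)`,
which is positive for `x > 1` and vanishes at `x = 1`. -/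
theorem stmt16 (ξ : ℝ) (hξ : 0 < ξ) (x : ℝ) :
    let c := (ξ ^ 2 - 1) / (2 * ξ)
    let A := -(ξ ^ 2 + 1) ^ 2 / (2 * ξ)
    let R₁ := -3 * (c ^ 2 + 1) * x ^ 2
    let R₂ := -2 * c * (c ^ 2 + 1) * x ^ 3 - A
    (-(4 * R₁ ^ 3 + 27 * R₂ ^ 2) =
        108 * (c ^ 2 + 1) ^ 2 * (x ^ 6 + (ξ ^ 2 - 1) * x ^ 3 - ξ ^ 2)) ∧
    (-(4 * R₁ ^ 3 + 27 * R₂ ^ 2) =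
        108 * (c ^ 2 + 1) ^ 2 * (x ^ 3 - 1) * (x ^ 3 + ξ ^ 2)) ∧
    (1 < x → 0 < -(4 * R₁ ^ 3 + 27 * R₂ ^ 2)) ∧
    (x = 1 → -(4 * R₁ ^ 3 + 27 * R₂ ^ 2) = 0) := by
  intro c A R₁ R₂
  have hc : 2 * ξ * c = ξ ^ 2 - 1 := mul_div_cancel₀ _ (by positivity)
  have hdisc : -(4 * R₁ ^ 3 + 27 * R₂ ^ 2) =
      108 * (c ^ 2 + 1) ^ 2 * (x ^ 6 + (ξ ^ 2 - 1) * x ^ 3 - ξ ^ 2) :=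
    neg_disc_eq x hc (neg_sq_add_one_sq_div_eq hξ.ne' hc)
  have hfactor : -(4 * R₁ ^ 3 + 27 * R₂ ^ 2) =
      108 * (c ^ 2 + 1) ^ 2 * (x ^ 3 - 1) * (x ^ 3 + ξ ^ 2) := by
    rw [hdisc]; ring
  refine ⟨hdisc, hfactor, fun hx => ?_, fun hx => ?_⟩
  · rw [hfactor, mul_assoc]
    exact mul_pos (by positivity) (pow_three_sub_one_mul_pos ξ hx)
  · rw [hfactor, hx]; ring
end

section
/- Let b > 1 and let q ≥ √(4b³ − 1), and set p := 3bq. Then 3(p²b − q²) > b³ − 1 (so the denominator below is positive), and q ≤ c_q, where c_q := (p³ − 3pb² − q³ + 3q)/(3p²b − b³ − 3q² + 1). In particular 0 < q ≤ c_q. -/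
/-! With `p = 3bq` the denominator of `c_q` is `3q²(9b³ − 1) − (b³ − 1)`, positive as soon as
`q ≥ 1`, and the numerator minus `q` times the denominator factors as `2q(q² − (4b³ − 1))`,
which is nonnegative exactly when `q ≥ √(4b³ − 1)`. -/

lemma cube_sub_one_lt_of_one_le_sq {b q : ℝ} (hb : 1 < b) (hq : 1 ≤ q ^ 2) :
    b ^ 3 - 1 < 3 * ((3 * b * q) ^ 2 * b - q ^ 2) := by
  have hb3 : 1 < b ^ 3 := one_lt_pow₀ hb three_ne_zero
  calc b ^ 3 - 1 < 3 * (9 * b ^ 3 - 1) := by linarith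
    _ ≤ 3 * q ^ 2 * (9 * b ^ 3 - 1) := by nlinarith
    _ = 3 * ((3 * b * q) ^ 2 * b - q ^ 2) := by ring

lemma cq_numerator_sub_mul_denominator (b q : ℝ) :
    ((3 * b * q) ^ 3 - 3 * (3 * b * q) * b ^ 2 - q ^ 3 + 3 * q) -
        q * (3 * (3 * b * q) ^ 2 * b - b ^ 3 - 3 * q ^ 2 + 1) =
      2 * q * (q ^ 2 - (4 * b ^ 3 - 1)) := by
  ring

/-- Second kind of dHYM unstability on the blow-up of `CP³`: for `p = 3bq` with
`q ≥ √(4b³ − 1)` one has `Im((p+ib)³) > Im((q+i)³)` and `0 < q ≤ c_q`. -/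
theorem stmt17 (b q : ℝ) (hb : 1 < b) (hq : Real.sqrt (4 * b ^ 3 - 1) ≤ q) :
    b ^ 3 - 1 < 3 * ((3 * b * q) ^ 2 * b - q ^ 2) ∧
    q ≤ ((3 * b * q) ^ 3 - 3 * (3 * b * q) * b ^ 2 - q ^ 3 + 3 * q) /
        (3 * (3 * b * q) ^ 2 * b - b ^ 3 - 3 * q ^ 2 + 1) ∧
    0 < q := by
  obtain ⟨hq0, hq2⟩ := Real.sqrt_le_iff.mp hq
  have hb3 : 1 < b ^ 3 := one_lt_pow₀ hb three_ne_zero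
  have hq1 : 1 ≤ q ^ 2 := by linarith
  have hqpos : 0 < q := lt_of_le_of_ne hq0 (by rintro rfl; norm_num at hq1)
  have hgap := cube_sub_one_lt_of_one_le_sq hb hq1
  refine ⟨hgap, ?_, hqpos⟩
  rw [le_div_iff₀ (by linarith)]
  have hnum := cq_numerator_sub_mul_denominator b q
  have hfactor : 0 ≤ 2 * q * (q ^ 2 - (4 * b ^ 3 - 1)) := by
    have := sub_nonneg.mpr hq2
    positivity
  linarith
end

section
/- Let b > 1 and set b_⋆ := √( (√(b³(17b³ − 1)) − b³ − 2)/(2(4b³ + 1)) ) and b^⋆ := √( 3(2b³ − 1)/(8b³ − 1) ). Let q > b_⋆ and set p := 2bq. Then 3(p²b − q²) > b³ − 1 (so the denominator below is positive), and with c_q := (p³ − 3pb² − q³ + 3q)/(3p²b − b³ − 3q² + 1) one has c_q < q < c_q + √(c_q² + 1). Moreover √((b³ − 1)/(3(4b³ − 1))) < b_⋆ < b^⋆ < 1, and c_q > 0 if q > b^⋆, c_q = 0 if q = b^⋆, and c_q < 0 if b_⋆ < q < b^⋆. -/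
/-!
Put `B = b³`. For `p = 2bq` the numerator of `c_q` factors as `q((8B−1)q² − 3(2B−1))` and the
denominator is `D = 3(4B−1)q² − (B−1)`, positive as soon as `q² > (B−1)/(3(4B−1))`. Then the sign
of `c_q` is that of `q² − (b^⋆)²`, and `q − c_q = q((4B−2)q² + 5B − 2)/D > 0`. The inequality
`q < c_q + √(c_q² + 1)` follows from `q² − 2q c_q < 1`, which after clearing `D` reads
`(4B+1)q⁴ + (B+2)q² − (B−1) > 0`; as a quadratic in `q²` this is increasing on `q² > 0` and equals
`7B/(4(4B+1))` at `q² = b_⋆²`, since `b_⋆²` is built from `√(B(17B−1))`. The comparisons between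
the thresholds are polynomial inequalities in `B` once that square root is bounded by squaring.
-/

noncomputable section

/- With `B = b³`, these are the squares of `√((b³−1)/(3(4b³−1)))`, `b_⋆` and `b^⋆`, and
`slopeAt B q` is `c_q` for `p = 2bq` (see `slope_two_mul_eq`). -/
def denomRootSq (B : ℝ) : ℝ := (B - 1) / (3 * (4 * B - 1))

def lowerStarSq (B : ℝ) : ℝ := (√(B * (17 * B - 1)) - B - 2) / (2 * (4 * B + 1))

def upperStarSq (B : ℝ) : ℝ := 3 * (2 * B - 1) / (8 * B - 1)

def slopeAt (B q : ℝ) : ℝ :=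
  q * ((8 * B - 1) * q ^ 2 - 3 * (2 * B - 1)) / (3 * (4 * B - 1) * q ^ 2 - (B - 1))

section Thresholds

variable {B : ℝ} (hB : 1 < B)
include hB

theorem denomRootSq_pos : 0 < denomRootSq B :=
  div_pos (by linarith) (by linarith)

theorem denomRootSq_lt_lowerStarSq : denomRootSq B < lowerStarSq B := by
  have hr : (20 * B ^ 2 + 15 * B - 8) / (3 * (4 * B - 1)) < √(B * (17 * B - 1)) := by
    rw [Real.lt_sqrt (div_nonneg (by nlinarith) (by linarith)), div_pow,
      div_lt_iff₀ (by nlinarith)]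
    nlinarith [mul_pos (by linarith : (0:ℝ) < B - 1) (by linarith : (0:ℝ) < B)]
  rw [denomRootSq, lowerStarSq, div_lt_div_iff₀ (by linarith) (by linarith)]
  rw [div_lt_iff₀ (by linarith)] at hr
  nlinarith

theorem lowerStarSq_lt_upperStarSq : lowerStarSq B < upperStarSq B := by
  have hr : √(B * (17 * B - 1)) < (56 * B ^ 2 + 3 * B - 8) / (8 * B - 1) := by
    rw [Real.sqrt_lt' (div_pos (by nlinarith) (by linarith)), div_pow, lt_div_iff₀ (by nlinarith)]
    nlinarith [mul_pos (by linarith : (0:ℝ) < B - 1) (by linarith : (0:ℝ) < B)]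
  rw [lowerStarSq, upperStarSq, div_lt_div_iff₀ (by linarith) (by linarith)]
  rw [lt_div_iff₀ (by linarith)] at hr
  nlinarith

theorem sqrt_upperStarSq_lt_one : √(upperStarSq B) < 1 := by
  rw [Real.sqrt_lt' one_pos, one_pow, upperStarSq, div_lt_one (by linarith)]
  linarith

theorem quadratic_lowerStarSq :
    (4 * B + 1) * lowerStarSq B ^ 2 + (B + 2) * lowerStarSq B - (B - 1) =
      7 * B / (4 * (4 * B + 1)) := by
  have hs : √(B * (17 * B - 1)) ^ 2 = B * (17 * B - 1) := Real.sq_sqrt (by nlinarith)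
  rw [lowerStarSq]
  generalize √(B * (17 * B - 1)) = s at hs
  field_simp
  linear_combination 4 * hs

theorem lowerStarSq_pos : 0 < lowerStarSq B :=
  (denomRootSq_pos hB).trans (denomRootSq_lt_lowerStarSq hB)

theorem quadratic_pos_of_lowerStarSq_lt {t : ℝ} (ht : lowerStarSq B < t) :
    0 < (4 * B + 1) * t ^ 2 + (B + 2) * t - (B - 1) := by
  have hx := lowerStarSq_pos hB
  have hmono : 0 < (t - lowerStarSq B) * ((4 * B + 1) * (t + lowerStarSq B) + B + 2) :=
    mul_pos (by linarith) (by nlinarith)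
  have hval : 0 < 7 * B / (4 * (4 * B + 1)) := by positivity
  nlinarith [quadratic_lowerStarSq hB]

end Thresholds

theorem lt_add_sqrt_sq_add_one {q c : ℝ} (h : q ^ 2 - 1 < 2 * q * c) :
    q < c + √(c ^ 2 + 1) := by
  rcases le_or_gt q c with hqc | hqc
  · linarith [Real.sqrt_pos.2 (by positivity : 0 < c ^ 2 + 1)]
  · linarith [(Real.lt_sqrt (sub_nonneg.2 hqc.le)).2 (by nlinarith : (q - c) ^ 2 < c ^ 2 + 1)]

section Slope

variable {B q : ℝ}

theorem slope_two_mul_eq (b q : ℝ) :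
    ((2 * b * q) ^ 3 - 3 * (2 * b * q) * b ^ 2 - q ^ 3 + 3 * q) /
      (3 * (2 * b * q) ^ 2 * b - b ^ 3 - 3 * q ^ 2 + 1) = slopeAt (b ^ 3) q := by
  rw [slopeAt]
  ring

theorem denom_pos_of_denomRootSq_lt (hB : 1 < B) (h : denomRootSq B < q ^ 2) :
    0 < 3 * (4 * B - 1) * q ^ 2 - (B - 1) := by
  rw [denomRootSq, div_lt_iff₀ (by linarith)] at h
  linarith

variable (hD : 0 < 3 * (4 * B - 1) * q ^ 2 - (B - 1))
include hD

theorem slopeAt_lt_self (hB : 1 < B) (hq : 0 < q) : slopeAt B q < q := by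
  have hgap : 0 < q * ((4 * B - 2) * q ^ 2 + 5 * B - 2) := mul_pos hq (by nlinarith)
  rw [slopeAt, div_lt_iff₀ hD]
  linarith

theorem sq_sub_one_lt_two_mul_slopeAt
    (hE : 0 < (4 * B + 1) * (q ^ 2) ^ 2 + (B + 2) * q ^ 2 - (B - 1)) :
    q ^ 2 - 1 < 2 * q * slopeAt B q := by
  rw [slopeAt, ← mul_div_assoc, lt_div_iff₀ hD]
  linarith

theorem slopeAt_eq_mul_sub_sqrt_upperStarSq (hB : 1 < B) (hq : 0 < q) :
    ∃ k, 0 < k ∧ slopeAt B q = k * (q - √(upperStarSq B)) := by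
  have hu : √(upperStarSq B) ^ 2 = upperStarSq B :=
    Real.sq_sqrt (div_nonneg (by linarith) (by linarith))
  have hu' : (8 * B - 1) * upperStarSq B = 3 * (2 * B - 1) := by
    rw [upperStarSq, mul_div_cancel₀ _ (by linarith : 8 * B - 1 ≠ 0)]
  refine ⟨q * (8 * B - 1) * (q + √(upperStarSq B)) / (3 * (4 * B - 1) * q ^ 2 - (B - 1)),
    div_pos (mul_pos (mul_pos hq (by linarith)) (by positivity)) hD, ?_⟩
  rw [slopeAt, div_mul_eq_mul_div]
  congr 1
  linear_combination q * (8 * B - 1) * hu + q * hu'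

end Slope

/-- First kind of dHYM unstability on the blow-up of `CP³`: for `p = 2bq` with
`q > b_⋆` one has `Im((p+ib)³) > Im((q+i)³)` and `c_q < q < c_q + √(c_q² + 1)`;
moreover `√((b³−1)/(3(4b³−1))) < b_⋆ < b^⋆ < 1`, and the sign of `c_q` is determined
by the position of `q` relative to `b^⋆`. -/
theorem stmt18 (b q : ℝ) (hb : 1 < b)
    (hq : Real.sqrt ((Real.sqrt (b ^ 3 * (17 * b ^ 3 - 1)) - b ^ 3 - 2) /
        (2 * (4 * b ^ 3 + 1))) < q) :
    b ^ 3 - 1 < 3 * ((2 * b * q) ^ 2 * b - q ^ 2) ∧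
    (((2 * b * q) ^ 3 - 3 * (2 * b * q) * b ^ 2 - q ^ 3 + 3 * q) /
        (3 * (2 * b * q) ^ 2 * b - b ^ 3 - 3 * q ^ 2 + 1) < q ∧
      q < ((2 * b * q) ^ 3 - 3 * (2 * b * q) * b ^ 2 - q ^ 3 + 3 * q) /
            (3 * (2 * b * q) ^ 2 * b - b ^ 3 - 3 * q ^ 2 + 1) +
          Real.sqrt ((((2 * b * q) ^ 3 - 3 * (2 * b * q) * b ^ 2 - q ^ 3 + 3 * q) /
            (3 * (2 * b * q) ^ 2 * b - b ^ 3 - 3 * q ^ 2 + 1)) ^ 2 + 1)) ∧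
    (Real.sqrt ((b ^ 3 - 1) / (3 * (4 * b ^ 3 - 1))) <
        Real.sqrt ((Real.sqrt (b ^ 3 * (17 * b ^ 3 - 1)) - b ^ 3 - 2) /
          (2 * (4 * b ^ 3 + 1))) ∧
      Real.sqrt ((Real.sqrt (b ^ 3 * (17 * b ^ 3 - 1)) - b ^ 3 - 2) /
          (2 * (4 * b ^ 3 + 1))) < Real.sqrt (3 * (2 * b ^ 3 - 1) / (8 * b ^ 3 - 1)) ∧
      Real.sqrt (3 * (2 * b ^ 3 - 1) / (8 * b ^ 3 - 1)) < 1) ∧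
    (Real.sqrt (3 * (2 * b ^ 3 - 1) / (8 * b ^ 3 - 1)) < q →
      0 < ((2 * b * q) ^ 3 - 3 * (2 * b * q) * b ^ 2 - q ^ 3 + 3 * q) /
          (3 * (2 * b * q) ^ 2 * b - b ^ 3 - 3 * q ^ 2 + 1)) ∧
    (q = Real.sqrt (3 * (2 * b ^ 3 - 1) / (8 * b ^ 3 - 1)) →
      ((2 * b * q) ^ 3 - 3 * (2 * b * q) * b ^ 2 - q ^ 3 + 3 * q) /
          (3 * (2 * b * q) ^ 2 * b - b ^ 3 - 3 * q ^ 2 + 1) = 0) ∧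
    (q < Real.sqrt (3 * (2 * b ^ 3 - 1) / (8 * b ^ 3 - 1)) →
      ((2 * b * q) ^ 3 - 3 * (2 * b * q) * b ^ 2 - q ^ 3 + 3 * q) /
          (3 * (2 * b * q) ^ 2 * b - b ^ 3 - 3 * q ^ 2 + 1) < 0) := by
  have hB : 1 < b ^ 3 := one_lt_pow₀ hb three_ne_zero
  have hq0 : 0 < q := (Real.sqrt_nonneg _).trans_lt hq
  have hqt : lowerStarSq (b ^ 3) < q ^ 2 := (Real.sqrt_lt' hq0).1 hq
  have hD := denom_pos_of_denomRootSq_lt hB ((denomRootSq_lt_lowerStarSq hB).trans hqt)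
  obtain ⟨k, hk, hslope⟩ := slopeAt_eq_mul_sub_sqrt_upperStarSq hD hB hq0
  rw [slope_two_mul_eq]
  have hden_eq : 3 * ((2 * b * q) ^ 2 * b - q ^ 2) = 3 * (4 * b ^ 3 - 1) * q ^ 2 := by ring
  refine ⟨by linarith,
    ⟨slopeAt_lt_self hD hB hq0, lt_add_sqrt_sq_add_one
      (sq_sub_one_lt_two_mul_slopeAt hD (quadratic_pos_of_lowerStarSq_lt hB hqt))⟩,
    ⟨Real.sqrt_lt_sqrt (denomRootSq_pos hB).le (denomRootSq_lt_lowerStarSq hB),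
      Real.sqrt_lt_sqrt (lowerStarSq_pos hB).le (lowerStarSq_lt_upperStarSq hB),
      sqrt_upperStarSq_lt_one hB⟩, fun h => ?_, fun h => ?_, fun h => ?_⟩
  · rw [hslope]
    exact mul_pos hk (sub_pos.2 h)
  · rw [hslope, h]
    exact mul_eq_zero_of_right k (sub_self _)
  · rw [hslope]
    exact mul_neg_of_pos_of_neg hk (sub_neg.2 h)

end
end
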